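/- arXiv:0909.5324 — 5 statements merged into one kernel-verified Lean document; each statement's English description precedes it below -/
import Mathlib

section
/- Let C be a generalized Cartan matrix on a finite nonempty set I and let v : I → ℝ be a configuration. Suppose some legal play from v of length r ends at a configuration u all of whose coordinates are nonnegative. Then every legal play from v has length at most r, and every legal play from v ending at a configuration all of whose coordinates are nonnegative has length exactly r and ends at the same configuration u. (Strong convergence: if the numbers game terminates, then it must terminate in the same number of moves and at the same configuration regardless of how it is played.) -/
/-- Firing vertex `i`: `v` is replaced by `fun j => v j - C i j * v i`. -/
def fire {I : Type*} (C : I → I → ℤ) (i : I) (v : I → ℝ) : I → ℝ :=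
  fun j => v j - (C i j : ℝ) * v i

/-- The configuration resulting from firing the vertices in the list `l` successively. -/
def playResult {I : Type*} (C : I → I → ℤ) : (I → ℝ) → List I → (I → ℝ)
  | v, [] => v
  | v, i :: l => playResult C (fire C i v) l

/-- `IsPlay C θ v l` : the list `l` is a sequence of successive firings starting at `v`
in which each fired vertex has amplitude strictly less than `θ` at the time it is fired.
With `θ = 0` this is a legal play; with `θ = -1` a `(<-1)`-play. -/
def IsPlay {I : Type*} (C : I → I → ℤ) (θ : ℝ) : (I → ℝ) → List I → Prop
  | _, [] => True
  | v, i :: l => v i < θ ∧ IsPlay C θ (fire C i v) l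

/-! Induction on the length `r` of the terminating play. The heart of the argument is the
polygon property: if two distinct vertices `i`, `j` are both fireable at `v`, then either the
pair is hyperbolic (`C i j * C j i ≥ 4`) and firing `i`, `j` alternately never stops, so plays
from `fire C i v` are unbounded; or the pair is of type `A₁ × A₁`, `A₂`, `B₂` or `G₂`, and the
alternating plays `i, j, i, …` and `j, i, j, …` of length `2, 3, 4, 6` respectively are both
legal and reach the same configuration. Completing the first of these to a terminating play
from `fire C i v`, which by induction has length `r - 1` and ends at `u`, yields a terminating
play of length `r - 1` from `fire C j v` ending at `u`, and induction applies there too. -/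

section NumbersGame

variable {I : Type*} {C : I → I → ℤ}

section Plays

variable {θ : ℝ} {v : I → ℝ} {i : I} {l l₁ l₂ : List I}

@[simp] lemma playResult_nil : playResult C v [] = v := rfl

@[simp] lemma playResult_cons : playResult C v (i :: l) = playResult C (fire C i v) l := rfl

@[simp] lemma isPlay_nil : IsPlay C θ v [] := trivial

@[simp] lemma isPlay_cons : IsPlay C θ v (i :: l) ↔ v i < θ ∧ IsPlay C θ (fire C i v) l :=
  Iff.rfl

lemma fire_self (hi : C i i = 2) : fire C i v i = -v i := by
  simp only [fire, hi]
  push_cast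
  ring

lemma playResult_append :
    playResult C v (l₁ ++ l₂) = playResult C (playResult C v l₁) l₂ := by
  induction l₁ generalizing v with
  | nil => rfl
  | cons i l ih => exact ih

lemma isPlay_append :
    IsPlay C θ v (l₁ ++ l₂) ↔ IsPlay C θ v l₁ ∧ IsPlay C θ (playResult C v l₁) l₂ := by
  induction l₁ generalizing v with
  | nil => simp
  | cons i l ih => simp [ih, and_assoc]

lemma eq_nil_of_isPlay_of_nonneg (hv : ∀ j, 0 ≤ v j) (hl : IsPlay C 0 v l) : l = [] := by
  cases l with
  | nil => rfl
  | cons i l => exact absurd hl.1 (hv i).not_gt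

/-- Firing any negative vertex as long as there is one is a terminating strategy as soon as
the lengths of legal plays are bounded. -/
lemma exists_isPlay_nonneg_of_length_le (N : ℕ) (hN : ∀ l, IsPlay C 0 v l → l.length ≤ N) :
    ∃ l, IsPlay C 0 v l ∧ ∀ j, 0 ≤ playResult C v l j := by
  induction N generalizing v with
  | zero =>
    refine ⟨[], trivial, fun j => not_lt.mp fun hj => ?_⟩
    simpa using hN [j] ⟨hj, trivial⟩
  | succ N ih =>
    by_cases hv : ∀ j, 0 ≤ v j
    · exact ⟨[], trivial, hv⟩
    obtain ⟨j, hj⟩ := not_forall.mp hv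
    obtain ⟨l, hl, hl_nonneg⟩ :=
      ih fun l hl => by simpa using hN (j :: l) ⟨not_le.mp hj, hl⟩
    exact ⟨j :: l, ⟨not_le.mp hj, hl⟩, hl_nonneg⟩

end Plays

section Pairs

variable {v : I → ℝ} {i j : I}

/-- The invariant is preserved by firing `j`, with the roles of `i` and `j` exchanged. -/
lemma exists_isPlay_length_of_hyperbolic (hdiag : ∀ k, C k k = 2) (n : ℕ)
    (hij : (C i j : ℝ) ≤ 0) (hji : (C j i : ℝ) ≤ 0) (hhyp : 4 ≤ (C i j : ℝ) * C j i)
    (hvi : 0 ≤ v i) (hvj : v j < 0) (hinv : 2 * v i ≤ C j i * v j) :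
    ∃ l, IsPlay C 0 v l ∧ l.length = n := by
  induction n generalizing i j v with
  | zero => exact ⟨[], trivial, rfl⟩
  | succ n ih =>
    have hji_neg : (C j i : ℝ) < 0 := lt_of_le_of_ne hji fun h => by
      rw [h, mul_zero] at hhyp
      norm_num at hhyp
    have hfire_i : fire C j v i = v i - C j i * v j := rfl
    have hprod : 0 < (C j i : ℝ) * v j := mul_pos_of_neg_of_neg hji_neg hvj
    obtain ⟨l, hl, rfl⟩ := ih (v := fire C j v) hji hij (by linarith)
      (by rw [fire_self (hdiag j)]; linarith) (by rw [hfire_i]; linarith)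
      (by
        rw [fire_self (hdiag j), hfire_i]
        nlinarith [mul_le_mul_of_nonpos_left hinv hij,
          mul_le_mul_of_nonneg_right hhyp (show 0 ≤ -v j by linarith)])
    exact ⟨j :: l, ⟨hvj, hl⟩, rfl⟩

lemma exists_isPlay_fire_length_of_hyperbolic (hdiag : ∀ k, C k k = 2) (n : ℕ)
    (hij : C i j ≤ 0) (hji : C j i ≤ 0) (hhyp : 4 ≤ C i j * C j i) (hvi : v i < 0)
    (hvj : v j < 0) : ∃ l, IsPlay C 0 (fire C i v) l ∧ l.length = n := by
  have hij' : (C i j : ℝ) ≤ 0 := by exact_mod_cast hij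
  have hji' : (C j i : ℝ) ≤ 0 := by exact_mod_cast hji
  have hhyp' : (4 : ℝ) ≤ C i j * C j i := by exact_mod_cast hhyp
  have hfire_j : fire C i v j = v j - C i j * v i := rfl
  refine exists_isPlay_length_of_hyperbolic hdiag n hij' hji' hhyp'
    (by rw [fire_self (hdiag i)]; linarith) (by rw [hfire_j]; nlinarith) ?_
  rw [fire_self (hdiag i), hfire_j]
  nlinarith [mul_nonneg_of_nonpos_of_nonpos hji' hvj.le,
    mul_le_mul_of_nonneg_right hhyp' (show 0 ≤ -v i by linarith)]

variable (C v i j) in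
def HasPolygon : Prop :=
  ∃ P Q : List I, IsPlay C 0 v (i :: P) ∧ IsPlay C 0 v (j :: Q) ∧
    P.length = Q.length ∧ playResult C v (i :: P) = playResult C v (j :: Q)

lemma HasPolygon.symm (h : HasPolygon C v i j) : HasPolygon C v j i :=
  let ⟨P, Q, hP, hQ, hlen, heq⟩ := h
  ⟨Q, P, hQ, hP, hlen.symm, heq.symm⟩

lemma hasPolygon_of_typeA1A1 (hi : v i < 0) (hj : v j < 0)
    (hij : C i j = 0) (hji : C j i = 0) : HasPolygon C v i j := by
  refine ⟨[j], [i], ?_, ?_, rfl, funext fun k => ?_⟩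
  all_goals simp only [isPlay_cons, isPlay_nil, playResult_cons, playResult_nil, fire, hij, hji]
  all_goals push_cast
  · refine ⟨?_, ?_, trivial⟩ <;> linarith
  · refine ⟨?_, ?_, trivial⟩ <;> linarith
  · ring

lemma hasPolygon_of_typeA2 (hii : C i i = 2) (hjj : C j j = 2) (hi : v i < 0) (hj : v j < 0)
    (hij : C i j = -1) (hji : C j i = -1) : HasPolygon C v i j := by
  refine ⟨[j, i], [i, j], ?_, ?_, rfl, funext fun k => ?_⟩
  all_goals
    simp only [isPlay_cons, isPlay_nil, playResult_cons, playResult_nil, fire, hii, hjj, hij, hji]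
  all_goals push_cast
  · refine ⟨?_, ?_, ?_, trivial⟩ <;> linarith
  · refine ⟨?_, ?_, ?_, trivial⟩ <;> linarith
  · ring

lemma hasPolygon_of_typeB2 (hii : C i i = 2) (hjj : C j j = 2) (hi : v i < 0) (hj : v j < 0)
    (hij : C i j = -1) (hji : C j i = -2) : HasPolygon C v i j := by
  refine ⟨[j, i, j], [i, j, i], ?_, ?_, rfl, funext fun k => ?_⟩
  all_goals
    simp only [isPlay_cons, isPlay_nil, playResult_cons, playResult_nil, fire, hii, hjj, hij, hji]
  all_goals push_cast
  · refine ⟨?_, ?_, ?_, ?_, trivial⟩ <;> linarith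
  · refine ⟨?_, ?_, ?_, ?_, trivial⟩ <;> linarith
  · ring

lemma hasPolygon_of_typeG2 (hii : C i i = 2) (hjj : C j j = 2) (hi : v i < 0) (hj : v j < 0)
    (hij : C i j = -1) (hji : C j i = -3) : HasPolygon C v i j := by
  refine ⟨[j, i, j, i, j], [i, j, i, j, i], ?_, ?_, rfl, funext fun k => ?_⟩
  all_goals
    simp only [isPlay_cons, isPlay_nil, playResult_cons, playResult_nil, fire, hii, hjj, hij, hji]
  all_goals push_cast
  · refine ⟨?_, ?_, ?_, ?_, ?_, ?_, trivial⟩ <;> linarith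
  · refine ⟨?_, ?_, ?_, ?_, ?_, ?_, trivial⟩ <;> linarith
  · ring

lemma Int.cases_of_neg_of_mul_lt_four {a b : ℤ} (ha : a < 0) (hb : b < 0) (hab : a * b < 4) :
    (a = -1 ∧ b = -1) ∨ (a = -1 ∧ b = -2) ∨ (a = -2 ∧ b = -1) ∨ (a = -1 ∧ b = -3) ∨
      (a = -3 ∧ b = -1) := by
  have : -3 ≤ a := by nlinarith
  have : -3 ≤ b := by nlinarith
  interval_cases a <;> interval_cases b <;> omega

lemma hasPolygon_of_length_le (hdiag : ∀ k, C k k = 2) (hoff : ∀ k l, k ≠ l → C k l ≤ 0)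
    (hzero : ∀ k l, C k l = 0 ↔ C l k = 0) (hne : i ≠ j) (hi : v i < 0) (hj : v j < 0) (N : ℕ)
    (hN : ∀ l, IsPlay C 0 (fire C i v) l → l.length ≤ N) : HasPolygon C v i j := by
  have hij := hoff i j hne
  have hji := hoff j i hne.symm
  by_cases hij0 : C i j = 0
  · exact hasPolygon_of_typeA1A1 hi hj hij0 ((hzero i j).mp hij0)
  have hji0 : C j i ≠ 0 := fun h => hij0 ((hzero j i).mp h)
  have hfinite : C i j * C j i < 4 := by
    by_contra! hhyp
    obtain ⟨l, hl, hlen⟩ :=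
      exists_isPlay_fire_length_of_hyperbolic hdiag (N + 1) hij hji hhyp hi hj
    have := hN l hl
    omega
  have hii := hdiag i
  have hjj := hdiag j
  rcases Int.cases_of_neg_of_mul_lt_four (lt_of_le_of_ne hij hij0) (lt_of_le_of_ne hji hji0)
    hfinite with ⟨h₁, h₂⟩ | ⟨h₁, h₂⟩ | ⟨h₁, h₂⟩ | ⟨h₁, h₂⟩ | ⟨h₁, h₂⟩
  · exact hasPolygon_of_typeA2 hii hjj hi hj h₁ h₂
  · exact hasPolygon_of_typeB2 hii hjj hi hj h₁ h₂
  · exact (hasPolygon_of_typeB2 hjj hii hj hi h₂ h₁).symm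
  · exact hasPolygon_of_typeG2 hii hjj hi hj h₁ h₂
  · exact (hasPolygon_of_typeG2 hjj hii hj hi h₂ h₁).symm

end Pairs

section Convergence

variable {v u : I → ℝ} {n : ℕ}

variable (C) in
def ConvergesTo (v : I → ℝ) (n : ℕ) (u : I → ℝ) : Prop :=
  (∀ q, IsPlay C 0 v q → q.length ≤ n) ∧
    ∀ q, IsPlay C 0 v q → (∀ j, 0 ≤ playResult C v q j) →
      q.length = n ∧ playResult C v q = u

lemma convergesTo_zero (hv : ∀ j, 0 ≤ v j) : ConvergesTo C v 0 v := by
  refine ⟨fun q hq => ?_, fun q hq _ => ?_⟩ <;> obtain rfl := eq_nil_of_isPlay_of_nonneg hv hq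
  · rfl
  · exact ⟨rfl, rfl⟩

lemma convergesTo_succ {i : I} (hi : v i < 0)
    (h : ∀ j, v j < 0 → ConvergesTo C (fire C j v) n u) : ConvergesTo C v (n + 1) u := by
  constructor
  · rintro (_ | ⟨j, q⟩) hq
    · simp
    · simpa using (h j hq.1).1 q hq.2
  · rintro (_ | ⟨j, q⟩) hq hq_nonneg
    · exact absurd (hq_nonneg i) hi.not_ge
    · obtain ⟨hlen, heq⟩ := (h j hq.1).2 q hq.2 hq_nonneg
      exact ⟨by simp [hlen], heq⟩

lemma ConvergesTo.exists_isPlay_fire (hdiag : ∀ k, C k k = 2)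
    (hoff : ∀ k l, k ≠ l → C k l ≤ 0) (hzero : ∀ k l, C k l = 0 ↔ C l k = 0) {i j : I}
    (h : ConvergesTo C (fire C i v) n u) (hne : i ≠ j) (hi : v i < 0) (hj : v j < 0) :
    ∃ s, IsPlay C 0 (fire C j v) s ∧ s.length = n ∧ playResult C (fire C j v) s = u := by
  obtain ⟨P, Q, hP, hQ, hlen, heq⟩ := hasPolygon_of_length_le hdiag hoff hzero hne hi hj n h.1
  simp only [playResult_cons] at heq
  have hbound : ∀ g, IsPlay C 0 (playResult C (fire C i v) P) g → g.length ≤ n - P.length :=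
    fun g hg => by
      have := h.1 (P ++ g) (isPlay_append.mpr ⟨hP.2, hg⟩)
      simp only [List.length_append] at this
      omega
  obtain ⟨g, hg, hg_nonneg⟩ := exists_isPlay_nonneg_of_length_le _ hbound
  obtain ⟨hPg_len, hPg_eq⟩ :=
    h.2 (P ++ g) (isPlay_append.mpr ⟨hP.2, hg⟩) (by rwa [playResult_append])
  refine ⟨Q ++ g, isPlay_append.mpr ⟨hQ.2, heq ▸ hg⟩, ?_, ?_⟩
  · simp only [List.length_append] at hPg_len ⊢
    omega
  · rw [playResult_append, ← heq, ← playResult_append, hPg_eq]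

theorem convergesTo_of_isPlay (hdiag : ∀ k, C k k = 2) (hoff : ∀ k l, k ≠ l → C k l ≤ 0)
    (hzero : ∀ k l, C k l = 0 ↔ C l k = 0) {p : List I} (hp : IsPlay C 0 v p)
    (hp_nonneg : ∀ j, 0 ≤ playResult C v p j) : ConvergesTo C v p.length (playResult C v p) := by
  suffices ∀ n v p, IsPlay C 0 v p → p.length = n → (∀ j, 0 ≤ playResult C v p j) →
      ConvergesTo C v n (playResult C v p) from this _ v p hp rfl hp_nonneg
  intro n
  induction n with
  | zero =>
    rintro v p - hlen hp_nonneg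
    obtain rfl := List.eq_nil_of_length_eq_zero hlen
    exact convergesTo_zero hp_nonneg
  | succ n ih =>
    rintro v (_ | ⟨i, p⟩) ⟨hi, hp⟩ hlen hp_nonneg
    · simp at hlen
    have hconv := ih _ p hp (by simpa using hlen) hp_nonneg
    refine convergesTo_succ hi fun j hj => ?_
    rcases eq_or_ne i j with rfl | hne
    · exact hconv
    obtain ⟨s, hs, hs_len, hs_eq⟩ := hconv.exists_isPlay_fire hdiag hoff hzero hne hi hj
    have := ih _ s hs hs_len (hs_eq ▸ hp_nonneg)
    rwa [hs_eq] at this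

end Convergence

end NumbersGame

theorem numbers_game_strong_convergence_general
    {I : Type*} (C : I → I → ℤ)
    (hdiag : ∀ i, C i i = 2)
    (hoff : ∀ i j, i ≠ j → C i j ≤ 0)
    (hzero : ∀ i j, C i j = 0 ↔ C j i = 0)
    (v : I → ℝ) (p : List I)
    (hp : IsPlay C 0 v p)
    (hend : ∀ j, 0 ≤ playResult C v p j) :
    (∀ q : List I, IsPlay C 0 v q → q.length ≤ p.length) ∧
    (∀ q : List I, IsPlay C 0 v q → (∀ j, 0 ≤ playResult C v q j) →
      q.length = p.length ∧ playResult C v q = playResult C v p) :=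
  convergesTo_of_isPlay hdiag hoff hzero hp hend

/-- Strong convergence of the numbers game: if some legal play from `v` terminates at a
nonnegative configuration `u` in `r` moves, then every legal play from `v` has length at
most `r`, and every legal play from `v` ending at a nonnegative configuration has length
exactly `r` and ends at `u`. -/
theorem numbers_game_strong_convergence
    {I : Type*} [Fintype I] [Nonempty I] (C : I → I → ℤ)
    (hdiag : ∀ i, C i i = 2)
    (hoff : ∀ i j, i ≠ j → C i j ≤ 0)
    (hzero : ∀ i j, C i j = 0 ↔ C j i = 0)
    (v : I → ℝ) (p : List I)
    (hp : IsPlay C 0 v p)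
    (hend : ∀ j, 0 ≤ playResult C v p j) :
    (∀ q : List I, IsPlay C 0 v q → q.length ≤ p.length) ∧
    (∀ q : List I, IsPlay C 0 v q → (∀ j, 0 ≤ playResult C v q j) →
      q.length = p.length ∧ playResult C v q = playResult C v p) :=
  numbers_game_strong_convergence_general C hdiag hoff hzero v p hp hend
end

section
/- Let C be a connected generalized Cartan matrix on a finite nonempty set I with an affine datum δ, and let v : I → ℝ be a configuration with Σ_i (δ i)·(v i) = 0. Then the set of configurations reachable from v is finite; that is, the numbers game from v loops, reaching only finitely many distinct configurations. -/
/-!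
Firing is dual to the reflections `sᵢ x = x - (C x)ᵢ eᵢ` of integer vectors: coordinate `j` of
the configuration reached by a play is `⟨v, x⟩`, where `x` is obtained from `eⱼ` by reflections.
A connected GCM with a positive vector `δ` satisfying `C δ ≥ 0` is symmetrizable (remove a leaf and
extend; if every vertex has at least two neighbours, counting with the weights `δ` forces every
edge entry to be `-1`), so the reflections preserve the quadratic form `q` of `D C`. This form is
positive semidefinite with `δ` in its radical, and it bounds the differences `xₐ/δₐ - x_b/δ_b`
along edges. Since `⟨v, δ⟩ = 0`, `x` may be shifted by a multiple of `δ` until `x i₀ ∈ [0, δ i₀)`,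
and only finitely many integer vectors have `q(x) = q(eⱼ)` and such a coordinate.
-/

open Matrix Finset

section

variable {I : Type*}

def dynkinAdj {R : Type*} [Zero R] (C : I → I → R) (a b : I) : Prop := a ≠ b ∧ C a b ≠ 0

def IsSymmetrizable (C : I → I → ℤ) : Prop :=
  ∃ d : I → ℝ, (∀ i, 0 < d i) ∧ ∀ i j, d i * C i j = d j * C j i

section Symmetrizable

variable [Fintype I]

section Neighbors

variable [DecidableEq I] {C : I → I → ℤ}

def neighbors (C : I → I → ℤ) (i : I) : Finset I := (univ.erase i).filter (C i · ≠ 0)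

theorem mem_neighbors {i j : I} : j ∈ neighbors C i ↔ dynkinAdj C i j := by
  simp [neighbors, dynkinAdj, ne_comm]

theorem mem_neighbors_comm (hzero : ∀ i j, C i j = 0 ↔ C j i = 0) {i j : I} :
    j ∈ neighbors C i ↔ i ∈ neighbors C j := by
  simp only [mem_neighbors, dynkinAdj, ne_comm, ne_eq, hzero i j]

theorem exists_mem_neighbors [Nontrivial I]
    (hconn : ∀ a b, Relation.ReflTransGen (dynkinAdj C) a b) (i : I) : ∃ j, j ∈ neighbors C i := by
  obtain ⟨j, hj⟩ := exists_ne i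
  rcases (hconn i j).cases_head with h | ⟨k, hk, -⟩
  · exact absurd h.symm hj
  · exact ⟨k, mem_neighbors.2 hk⟩

theorem sum_mul_eq_two_mul_add_sum_neighbors (hdiag : ∀ i, C i i = 2) (δ : I → ℤ) (i : I) :
    ∑ j, C i j * δ j = 2 * δ i + ∑ j ∈ neighbors C i, C i j * δ j := by
  rw [neighbors, sum_filter_of_ne fun j _ h => left_ne_zero_of_mul h, ← hdiag i,
    add_sum_erase _ (fun j => C i j * δ j) (mem_univ i)]

theorem eq_neg_one_of_two_le_card_neighbors (hdiag : ∀ i, C i i = 2)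
    (hoff : ∀ i j, i ≠ j → C i j ≤ 0) (hzero : ∀ i j, C i j = 0 ↔ C j i = 0) {δ : I → ℤ}
    (hδ : ∀ i, 0 < δ i) (hrow : ∀ i, 0 ≤ ∑ j, C i j * δ j) (hdeg : ∀ i, 2 ≤ #(neighbors C i))
    {i j : I} (hj : j ∈ neighbors C i) : C i j = -1 := by
  have hle : ∀ i, ∀ j ∈ neighbors C i, δ j ≤ -C i j * δ j := fun i j hj => by
    obtain ⟨hij, hC⟩ := mem_neighbors.1 hj
    have : C i j ≤ -1 := by have := hoff i j hij; omega
    nlinarith [hδ j]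
  have hrow' : ∀ i, ∑ j ∈ neighbors C i, -C i j * δ j ≤ 2 * δ i := fun i => by
    simp only [neg_mul, sum_neg_distrib]
    linarith [hrow i, sum_mul_eq_two_mul_add_sum_neighbors hdiag δ i]
  have hcount : ∑ i, ∑ j ∈ neighbors C i, δ j = ∑ i, #(neighbors C i) * δ i := by
    rw [sum_comm' (t' := univ) (s' := neighbors C) fun i j => by
      simp [mem_neighbors_comm hzero]]
    simp
  have htotal : ∑ i, ∑ j ∈ neighbors C i, δ j = ∑ i, ∑ j ∈ neighbors C i, -C i j * δ j :=
    le_antisymm (sum_le_sum fun i _ => sum_le_sum (hle i)) <| calc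
      _ ≤ ∑ i, 2 * δ i := sum_le_sum fun i _ => hrow' i
      _ ≤ ∑ i, #(neighbors C i) * δ i :=
        sum_le_sum fun i _ => mul_le_mul_of_nonneg_right (by exact_mod_cast hdeg i) (hδ i).le
      _ = _ := hcount.symm
  have hδj : δ j = -C i j * δ j := (sum_eq_sum_iff_of_le (hle i)).1
    ((sum_eq_sum_iff_of_le fun i _ => sum_le_sum (hle i)).1 htotal i (mem_univ i)) j hj
  have := mul_right_cancel₀ (hδ j).ne' (hδj.symm.trans (one_mul _).symm)
  omega

theorem isSymmetrizable_of_two_le_card_neighbors (hdiag : ∀ i, C i i = 2)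
    (hoff : ∀ i j, i ≠ j → C i j ≤ 0) (hzero : ∀ i j, C i j = 0 ↔ C j i = 0) {δ : I → ℤ}
    (hδ : ∀ i, 0 < δ i) (hrow : ∀ i, 0 ≤ ∑ j, C i j * δ j) (hdeg : ∀ i, 2 ≤ #(neighbors C i)) :
    IsSymmetrizable C := by
  refine ⟨1, fun _ => one_pos, fun i j => ?_⟩
  suffices C i j = C j i by simp [this]
  rcases eq_or_ne i j with rfl | hij
  · rfl
  by_cases hC : C i j = 0
  · rw [hC, (hzero i j).1 hC]
  replace hij : j ∈ neighbors C i := mem_neighbors.2 ⟨hij, hC⟩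
  rw [eq_neg_one_of_two_le_card_neighbors hdiag hoff hzero hδ hrow hdeg hij,
    eq_neg_one_of_two_le_card_neighbors hdiag hoff hzero hδ hrow hdeg
      ((mem_neighbors_comm hzero).1 hij)]

theorem IsSymmetrizable.of_subtype_ne (hoff : ∀ i j, i ≠ j → C i j ≤ 0)
    (hzero : ∀ i j, C i j = 0 ↔ C j i = 0) {ℓ m : I} (hm : m ∈ neighbors C ℓ)
    (huniq : ∀ j ∈ neighbors C ℓ, j = m)
    (h : IsSymmetrizable fun a b : {x // x ≠ ℓ} => C a b) : IsSymmetrizable C := by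
  obtain ⟨d, hd, hsym⟩ := h
  obtain ⟨hℓm, hCℓm⟩ := mem_neighbors.1 hm
  let m' : {x // x ≠ ℓ} := ⟨m, hℓm.symm⟩
  have hCℓm_neg : (C ℓ m : ℝ) < 0 := by exact_mod_cast (hoff ℓ m hℓm).lt_of_ne hCℓm
  have hCmℓ_neg : (C m ℓ : ℝ) < 0 := by
    exact_mod_cast (hoff m ℓ hℓm.symm).lt_of_ne fun h => hCℓm ((hzero m ℓ).1 h)
  let e : I → ℝ := fun x => if hx : x = ℓ then d m' * C m ℓ / C ℓ m else d ⟨x, hx⟩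
  have he_pos : ∀ x, 0 < e x := fun x => by
    by_cases hx : x = ℓ
    · simp only [e, dif_pos hx]
      exact div_pos_of_neg_of_neg (mul_neg_of_pos_of_neg (hd m') hCmℓ_neg) hCℓm_neg
    · simp only [e, dif_neg hx]
      exact hd _
  have he_ℓ : ∀ j, e ℓ * C ℓ j = e j * C j ℓ := fun j => by
    by_cases hj : j = ℓ
    · rw [hj]
    by_cases hC : C ℓ j = 0
    · simp [hC, (hzero ℓ j).1 hC]
    obtain rfl := huniq j (mem_neighbors.2 ⟨Ne.symm hj, hC⟩)
    simp only [e, dif_pos rfl, dif_neg hj]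
    rw [div_mul_cancel₀ _ hCℓm_neg.ne]
  refine ⟨e, he_pos, fun i j => ?_⟩
  by_cases hi : i = ℓ
  · subst hi; exact he_ℓ j
  by_cases hj : j = ℓ
  · subst hj; exact (he_ℓ i).symm
  simpa [e, dif_neg hi, dif_neg hj] using hsym ⟨i, hi⟩ ⟨j, hj⟩

theorem reflTransGen_subtype_ne (hzero : ∀ i j, C i j = 0 ↔ C j i = 0)
    (hconn : ∀ a b, Relation.ReflTransGen (dynkinAdj C) a b) {ℓ m : I} (hm : m ∈ neighbors C ℓ)
    (huniq : ∀ j ∈ neighbors C ℓ, j = m) (a b : {x // x ≠ ℓ}) :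
    Relation.ReflTransGen (dynkinAdj fun a b : {x // x ≠ ℓ} => C a b) a b := by
  -- collapse the leaf `ℓ` onto its unique neighbour `m`
  let f : I → {x // x ≠ ℓ} := fun x =>
    if hx : x = ℓ then ⟨m, (mem_neighbors.1 hm).1.symm⟩ else ⟨x, hx⟩
  have hf : ∀ x : {x // x ≠ ℓ}, f x = x := fun x => by simp [f, x.2]
  have hedge : ∀ x y, dynkinAdj C x y →
      Relation.ReflTransGen (dynkinAdj fun a b : {x // x ≠ ℓ} => C a b) (f x) (f y) := by
    rintro x y ⟨hxy, hC⟩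
    by_cases hx : x = ℓ
    · subst hx
      obtain rfl := huniq y (mem_neighbors.2 ⟨hxy, hC⟩)
      rw [show f x = f y by simp [f, hxy.symm]]
    by_cases hy : y = ℓ
    · subst hy
      obtain rfl := huniq x (mem_neighbors.2 ⟨Ne.symm hxy, fun h => hC ((hzero _ _).1 h)⟩)
      rw [show f x = f y by simp [f, hx]]
    · simp only [f, dif_neg hx, dif_neg hy]
      exact .single ⟨fun h => hxy (congrArg Subtype.val h), hC⟩
  simpa [Function.onFun, hf] using Relation.ReflTransGen.lift' f hedge _ _ (hconn a b)

end Neighbors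

theorem isSymmetrizable_of_sum_mul_nonneg (C : I → I → ℤ) (hdiag : ∀ i, C i i = 2)
    (hoff : ∀ i j, i ≠ j → C i j ≤ 0) (hzero : ∀ i j, C i j = 0 ↔ C j i = 0)
    (hconn : ∀ a b, Relation.ReflTransGen (dynkinAdj C) a b) {δ : I → ℤ} (hδ : ∀ i, 0 < δ i)
    (hrow : ∀ i, 0 ≤ ∑ j, C i j * δ j) : IsSymmetrizable C := by
  classical
  induction hn : Fintype.card I using Nat.strong_induction_on generalizing I with
  | _ n ih =>
    rcases subsingleton_or_nontrivial I with hI | hI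
    · exact ⟨1, fun _ => one_pos, fun i j => by rw [Subsingleton.elim i j]⟩
    by_cases hdeg : ∀ i, 2 ≤ #(neighbors C i)
    · exact isSymmetrizable_of_two_le_card_neighbors hdiag hoff hzero hδ hrow hdeg
    obtain ⟨ℓ, hℓ⟩ := not_forall.1 hdeg
    obtain ⟨m, hm⟩ := exists_mem_neighbors hconn ℓ
    have huniq : ∀ j ∈ neighbors C ℓ, j = m := fun j hj => card_le_one.1 (by omega) j hj m hm
    refine IsSymmetrizable.of_subtype_ne hoff hzero hm huniq <|
      ih _ (hn ▸ Fintype.card_subtype_lt (not_not.2 rfl)) _ (fun i => hdiag i)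
        (fun i j hij => hoff i j (Subtype.coe_ne_coe.2 hij)) (fun i j => hzero i j)
        (reflTransGen_subtype_ne hzero hconn hm huniq) (fun i => hδ i) (fun i => ?_) rfl
    have hsplit := Fintype.sum_eq_add_sum_subtype_ne (fun j => C i j * δ j) ℓ
    nlinarith [hrow i, hoff i ℓ i.2, hδ ℓ]

end Symmetrizable

section QuadraticForm

variable [Fintype I] {B : Matrix I I ℝ}

theorem Matrix.IsSymm.dotProduct_mulVec_comm (hB : B.IsSymm) (x y : I → ℝ) :
    x ⬝ᵥ B *ᵥ y = y ⬝ᵥ B *ᵥ x := by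
  rw [dotProduct_mulVec, dotProduct_comm, ← mulVec_transpose, hB.eq]

theorem quadForm_sub_single [DecidableEq I] (hB : B.IsSymm) (y : I → ℝ) (i : I) (t : ℝ) :
    (y - Pi.single i t) ⬝ᵥ B *ᵥ (y - Pi.single i t) =
      y ⬝ᵥ B *ᵥ y - 2 * t * (B *ᵥ y) i + t ^ 2 * B i i := by
  simp only [mulVec_sub, dotProduct_sub, sub_dotProduct]
  rw [hB.dotProduct_mulVec_comm y (Pi.single i t)]
  have : (B *ᵥ Pi.single i t) i = B i i * t := by simp [mulVec, dotProduct, Pi.single_apply]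
  simp only [single_dotProduct, this]
  ring

theorem quadForm_sub_smul (hB : B.IsSymm) {δ : I → ℝ} (hδ : B *ᵥ δ = 0) (y : I → ℝ) (s : ℝ) :
    (y - s • δ) ⬝ᵥ B *ᵥ (y - s • δ) = y ⬝ᵥ B *ᵥ y := by
  simp only [mulVec_sub, dotProduct_sub, sub_dotProduct]
  rw [hB.dotProduct_mulVec_comm (s • δ) y]
  simp [mulVec_smul, hδ]

theorem two_mul_quadForm_mul_eq_sum (hB : B.IsSymm) {δ : I → ℝ} (hδ : B *ᵥ δ = 0) (z : I → ℝ) :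
    2 * ((δ * z) ⬝ᵥ B *ᵥ (δ * z)) = ∑ i, ∑ j, -B i j * δ i * δ j * (z i - z j) ^ 2 := by
  have hrow : ∀ i, ∑ j, B i j * δ j = 0 := fun i => congrFun hδ i
  have hcol : ∀ j, ∑ i, B i j * δ i = 0 := fun j => by simpa [hB.apply] using hrow j
  have expand : ∀ i j, -B i j * δ i * δ j * (z i - z j) ^ 2 =
      2 * ((δ i * z i) * (B i j * (δ j * z j))) - δ i * z i ^ 2 * (B i j * δ j)
        - δ j * z j ^ 2 * (B i j * δ i) := fun i j => by ring
  simp only [expand, sum_sub_distrib, ← mul_sum, hrow, mul_zero, sub_zero]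
  rw [sum_comm (f := fun i j => δ j * z j ^ 2 * (B i j * δ i))]
  simp only [← mul_sum, hcol, mul_zero, sum_const_zero, sub_zero]
  simp [dotProduct, mulVec, mul_sum]

theorem sq_sub_le_quadForm (hB : B.IsSymm) (hoff : ∀ i j, i ≠ j → B i j ≤ 0) {δ : I → ℝ}
    (hδ : B *ᵥ δ = 0) (hδpos : ∀ i, 0 ≤ δ i) (z : I → ℝ) (a b : I) :
    -B a b * δ a * δ b * (z a - z b) ^ 2 ≤ 2 * ((δ * z) ⬝ᵥ B *ᵥ (δ * z)) := by
  have hterm : ∀ i j, 0 ≤ -B i j * δ i * δ j * (z i - z j) ^ 2 := by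
    intro i j
    rcases eq_or_ne i j with rfl | hij
    · simp
    · exact mul_nonneg (mul_nonneg (mul_nonneg (neg_nonneg.2 (hoff i j hij)) (hδpos i))
        (hδpos j)) (sq_nonneg _)
  rw [two_mul_quadForm_mul_eq_sum hB hδ]
  calc -B a b * δ a * δ b * (z a - z b) ^ 2
      ≤ ∑ j, -B a j * δ a * δ j * (z a - z j) ^ 2 :=
        single_le_sum (fun j _ => hterm a j) (mem_univ b)
    _ ≤ _ := single_le_sum (f := fun i => ∑ j, -B i j * δ i * δ j * (z i - z j) ^ 2)
        (fun i _ => sum_nonneg fun j _ => hterm i j) (mem_univ a)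

theorem exists_abs_sub_le_of_reflTransGen (hB : B.IsSymm) (hoff : ∀ i j, i ≠ j → B i j ≤ 0)
    {δ : I → ℝ} (hδ : B *ᵥ δ = 0) (hδpos : ∀ i, 0 < δ i) (M : ℝ) {a b : I}
    (hab : Relation.ReflTransGen (dynkinAdj B) a b) :
    ∃ R, ∀ z, (δ * z) ⬝ᵥ B *ᵥ (δ * z) ≤ M → |z a - z b| ≤ R := by
  induction hab with
  | refl => exact ⟨0, fun z _ => by simp⟩
  | @tail b c _ hbc ih =>
    obtain ⟨R, hR⟩ := ih
    have hκ : 0 < -B b c * δ b * δ c :=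
      mul_pos (mul_pos (neg_pos.2 ((hoff b c hbc.1).lt_of_ne hbc.2)) (hδpos b)) (hδpos c)
    refine ⟨R + √(2 * M / (-B b c * δ b * δ c)), fun z hz => ?_⟩
    have hsq : (z b - z c) ^ 2 ≤ 2 * M / (-B b c * δ b * δ c) := by
      rw [le_div_iff₀ hκ]
      nlinarith [sq_sub_le_quadForm hB hoff hδ (fun i => (hδpos i).le) z b c]
    calc |z a - z c| ≤ |z a - z b| + |z b - z c| := abs_sub_le _ _ _
      _ ≤ _ := add_le_add (hR z hz) (Real.abs_le_sqrt hsq)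

theorem finite_setOf_forall_abs_intCast_le (r : I → ℝ) :
    {x : I → ℤ | ∀ k, |(x k : ℝ)| ≤ r k}.Finite := by
  classical
  refine (Set.finite_Icc (-fun k => ⌈r k⌉) fun k => ⌈r k⌉).subset fun x hx => ?_
  have hx' : ∀ k, |x k| ≤ ⌈r k⌉ := fun k => by
    exact_mod_cast (hx k).trans (Int.le_ceil (r k))
  exact ⟨fun k => neg_le_of_abs_le (hx' k), fun k => le_of_abs_le (hx' k)⟩

theorem finite_setOf_quadForm_le (hB : B.IsSymm) (hoff : ∀ i j, i ≠ j → B i j ≤ 0)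
    {δ : I → ℝ} (hδ : B *ᵥ δ = 0) (hδpos : ∀ i, 0 < δ i)
    (hconn : ∀ a b, Relation.ReflTransGen (dynkinAdj B) a b) (i₀ : I) (M : ℝ) (K : ℤ) :
    {x : I → ℤ | (Int.cast ∘ x) ⬝ᵥ B *ᵥ (Int.cast ∘ x) ≤ M ∧ |x i₀| ≤ K}.Finite := by
  choose R hR using fun k => exists_abs_sub_le_of_reflTransGen hB hoff hδ hδpos M (hconn k i₀)
  refine (finite_setOf_forall_abs_intCast_le fun k => δ k * (R k + K / δ i₀)).subset ?_
  rintro x ⟨hM, hK⟩ k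
  set z : I → ℝ := fun i => x i / δ i
  have hδz : δ * z = Int.cast ∘ x := funext fun i => mul_div_cancel₀ _ (hδpos i).ne'
  have hzk : |z k| ≤ R k + K / δ i₀ := by
    have h1 := hR k z (hδz ▸ hM)
    have h2 : |z i₀| ≤ K / δ i₀ := by
      rw [abs_div, abs_of_pos (hδpos i₀)]
      exact div_le_div_of_nonneg_right (by exact_mod_cast hK) (hδpos i₀).le
    linarith [abs_sub_abs_le_abs_sub (z k) (z i₀)]
  calc |(x k : ℝ)| = |δ k * z k| := congrArg abs (congrFun hδz k).symm
    _ = δ k * |z k| := by rw [abs_mul, abs_of_pos (hδpos k)]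
    _ ≤ _ := mul_le_mul_of_nonneg_left hzk (hδpos k).le

theorem exists_quadForm_eq_dotProduct_eq (hB : B.IsSymm) {δ : I → ℤ}
    (hδ : B *ᵥ (Int.cast ∘ δ) = 0) {v : I → ℝ} (hv : v ⬝ᵥ (Int.cast ∘ δ) = 0) {i₀ : I}
    (hδi₀ : 0 < δ i₀) (x : I → ℤ) :
    ∃ y : I → ℤ, (Int.cast ∘ y) ⬝ᵥ B *ᵥ (Int.cast ∘ y) = (Int.cast ∘ x) ⬝ᵥ B *ᵥ (Int.cast ∘ x) ∧
      v ⬝ᵥ (Int.cast ∘ y) = v ⬝ᵥ (Int.cast ∘ x) ∧ |y i₀| ≤ δ i₀ := by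
  set t := x i₀ / δ i₀
  have hcast : (Int.cast ∘ (x - t • δ) : I → ℝ) = Int.cast ∘ x - (t : ℝ) • Int.cast ∘ δ := by
    ext k; simp
  have hy : (x - t • δ) i₀ = x i₀ % δ i₀ := by simp [Int.emod_def, t, mul_comm]
  refine ⟨x - t • δ, by rw [hcast, quadForm_sub_smul hB hδ], by
    rw [hcast, dotProduct_sub, dotProduct_smul, hv, smul_zero, sub_zero], ?_⟩
  rw [hy, abs_of_nonneg (Int.emod_nonneg _ hδi₀.ne')]
  exact (Int.emod_lt_of_pos _ hδi₀).le

end QuadraticForm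

section Reflection

variable [Fintype I] [DecidableEq I]

def reflect {R : Type*} [CommRing R] (C : I → I → ℤ) (i : I) (x : I → R) : I → R :=
  x - Pi.single i (∑ j, (C i j : R) * x j)

theorem dotProduct_reflect (C : I → I → ℤ) (i : I) (v x : I → ℝ) :
    v ⬝ᵥ reflect C i x = fire C i v ⬝ᵥ x := by
  rw [reflect, dotProduct_sub, dotProduct_single]
  simp only [fire, dotProduct, sub_mul, sum_sub_distrib, mul_sum]
  congr 1
  exact sum_congr rfl fun j _ => by ring

theorem playResult_dotProduct (C : I → I → ℤ) (p : List I) (v x : I → ℝ) :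
    playResult C v p ⬝ᵥ x = v ⬝ᵥ p.foldr (reflect C) x := by
  induction p generalizing v with
  | nil => rfl
  | cons i p ih => rw [playResult, ih, List.foldr_cons, dotProduct_reflect]

theorem intCast_comp_foldr_reflect {R : Type*} [CommRing R] (C : I → I → ℤ) (p : List I)
    (x : I → ℤ) :
    (Int.cast ∘ p.foldr (reflect C) x : I → R) = p.foldr (reflect C) (Int.cast ∘ x) := by
  induction p with
  | nil => rfl
  | cons i p ih =>
    rw [List.foldr_cons, List.foldr_cons, ← ih]
    ext k
    by_cases hk : k = i <;> simp [reflect, hk]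

theorem playResult_apply (C : I → I → ℤ) (p : List I) (v : I → ℝ) (j : I) :
    playResult C v p j = v ⬝ᵥ (Int.cast ∘ p.foldr (reflect C) (Pi.single j 1)) := by
  rw [intCast_comp_foldr_reflect, ← playResult_dotProduct]
  simp [dotProduct, Pi.single_apply]

end Reflection

def symmetrization (d : I → ℝ) (C : I → I → ℤ) : Matrix I I ℝ := Matrix.of fun i j => d i * C i j

section Symmetrization

variable {d : I → ℝ} {C : I → I → ℤ}

theorem isSymm_symmetrization (hd : ∀ i j, d i * C i j = d j * C j i) :
    (symmetrization d C).IsSymm :=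
  Matrix.IsSymm.ext fun i j => hd j i

theorem symmetrization_nonpos (hd : ∀ i, 0 < d i) (hoff : ∀ i j, i ≠ j → C i j ≤ 0) {i j : I}
    (hij : i ≠ j) : symmetrization d C i j ≤ 0 :=
  mul_nonpos_of_nonneg_of_nonpos (hd i).le (by exact_mod_cast hoff i j hij)

theorem dynkinAdj_symmetrization (hd : ∀ i, 0 < d i) :
    dynkinAdj (symmetrization d C) = dynkinAdj C := by
  ext a b
  simp [dynkinAdj, symmetrization, (hd a).ne']

variable [Fintype I]

theorem symmetrization_mulVec_apply (y : I → ℝ) (i : I) :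
    (symmetrization d C *ᵥ y) i = d i * ∑ j, C i j * y j := by
  simp [symmetrization, mulVec, dotProduct, mul_sum, mul_assoc]

theorem symmetrization_mulVec_intCast_eq_zero {δ : I → ℤ} (hδ : ∀ i, ∑ j, C i j * δ j = 0) :
    symmetrization d C *ᵥ (Int.cast ∘ δ) = 0 := funext fun i => by
  simp [symmetrization_mulVec_apply, ← Int.cast_mul, ← Int.cast_sum, hδ i]

theorem quadForm_reflect [DecidableEq I] (hdiag : ∀ i, C i i = 2)
    (hd : ∀ i j, d i * C i j = d j * C j i) (y : I → ℝ) (i : I) :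
    reflect C i y ⬝ᵥ symmetrization d C *ᵥ reflect C i y = y ⬝ᵥ symmetrization d C *ᵥ y := by
  rw [reflect, quadForm_sub_single (isSymm_symmetrization hd), symmetrization_mulVec_apply]
  simp only [symmetrization, of_apply, hdiag, Int.cast_ofNat]
  ring

theorem quadForm_foldr_reflect [DecidableEq I] (hdiag : ∀ i, C i i = 2)
    (hd : ∀ i j, d i * C i j = d j * C j i) (p : List I) (y : I → ℝ) :
    p.foldr (reflect C) y ⬝ᵥ symmetrization d C *ᵥ p.foldr (reflect C) y =
      y ⬝ᵥ symmetrization d C *ᵥ y := by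
  induction p with
  | nil => rfl
  | cons i p ih => rw [List.foldr_cons, quadForm_reflect hdiag hd, ih]

end Symmetrization

end

/-- In the affine case with `δ · v = 0`, the numbers game from `v` loops: the set of
configurations reachable from `v` by legal plays is finite. -/
theorem numbers_game_loops_of_zero_pairing
    {I : Type*} [Fintype I] [Nonempty I] (C : I → I → ℤ)
    (hdiag : ∀ i, C i i = 2)
    (hoff : ∀ i j, i ≠ j → C i j ≤ 0)
    (hzero : ∀ i j, C i j = 0 ↔ C j i = 0)
    (hconn : ∀ i j : I, Relation.ReflTransGen (fun a b => a ≠ b ∧ C a b ≠ 0) i j)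
    (δ : I → ℤ) (hδpos : ∀ i, 1 ≤ δ i)
    (hδ : ∀ i, ∑ j : I, C i j * δ j = 0)
    (v : I → ℝ) (hv : ∑ i : I, (δ i : ℝ) * v i = 0) :
    {u : I → ℝ | ∃ p : List I, IsPlay C 0 v p ∧ playResult C v p = u}.Finite := by
  classical
  obtain ⟨d, hd, hsym⟩ := isSymmetrizable_of_sum_mul_nonneg C hdiag hoff hzero hconn
    (δ := δ) hδpos fun i => (hδ i).ge
  have hB := isSymm_symmetrization hsym
  have hδB := symmetrization_mulVec_intCast_eq_zero (d := d) hδ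
  have hvδ : v ⬝ᵥ (Int.cast ∘ δ) = 0 := by rw [dotProduct_comm]; simpa [dotProduct] using hv
  obtain ⟨i₀⟩ := ‹Nonempty I›
  have hfinite (M : ℝ) := finite_setOf_quadForm_le hB (fun _ _ => symmetrization_nonpos hd hoff)
    hδB (fun i => Int.cast_pos.2 (hδpos i)) (dynkinAdj_symmetrization hd ▸ hconn) i₀ M (δ i₀)
  set e : I → I → ℝ := fun j => Int.cast ∘ Pi.single j (1 : ℤ)
  refine (Set.Finite.pi fun j => (hfinite (e j ⬝ᵥ symmetrization d C *ᵥ e j)).image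
    fun x => v ⬝ᵥ (Int.cast ∘ x)).subset ?_
  rintro _ ⟨p, -, rfl⟩ j -
  obtain ⟨y, hqy, hvy, hy⟩ := exists_quadForm_eq_dotProduct_eq hB hδB hvδ (hδpos i₀)
    (p.foldr (reflect C) (Pi.single j 1))
  refine ⟨y, ⟨le_of_eq ?_, hy⟩, ?_⟩
  · rw [hqy, intCast_comp_foldr_reflect, quadForm_foldr_reflect hdiag hsym]
  · rw [playResult_apply, ← hvy]
end

section
/- Let C be a generalized Cartan matrix on a finite nonempty set I and let v : I → ℝ be a configuration. If two (<-1)-plays from v each end at a configuration having no coordinate strictly less than -1, then the two plays have the same score vector; that is, for each vertex a ∈ I, the sum of the amplitudes of a over the steps at which a was fired is the same for both plays. -/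
/-- The score vector of a play from `v`: at each vertex `a`, the sum over the steps of the
play at which `a` was fired of the amplitude of `a` at the time of that firing. -/
def score {I : Type*} [DecidableEq I] (C : I → I → ℤ) : (I → ℝ) → List I → (I → ℝ)
  | _, [] => fun _ => 0
  | v, i :: l => fun a => (if a = i then v i else 0) + score C (fire C i v) l a

set_option linter.unusedSectionVars false
namespace NG

variable {I : Type*} [DecidableEq I]

lemma isPlay_append (C : I → I → ℤ) (θ : ℝ) :
    ∀ (p : List I) (v : I → ℝ) (q : List I),
    IsPlay C θ v (p ++ q) ↔ IsPlay C θ v p ∧ IsPlay C θ (playResult C v p) q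
  | [], v, q => by simp [IsPlay, playResult]
  | i :: p, v, q => by
      simp [IsPlay, playResult, isPlay_append C θ p (fire C i v) q, and_assoc]

lemma playResult_append (C : I → I → ℤ) :
    ∀ (p : List I) (v : I → ℝ) (q : List I),
    playResult C v (p ++ q) = playResult C (playResult C v p) q
  | [], _, _ => rfl
  | i :: p, v, q => playResult_append C p (fire C i v) q

lemma score_append (C : I → I → ℤ) :
    ∀ (p : List I) (v : I → ℝ) (q : List I) (a : I),
    score C v (p ++ q) a = score C v p a + score C (playResult C v p) q a
  | [], v, q, a => by simp [score, playResult]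
  | i :: p, v, q, a => by
      simp only [List.cons_append, score, playResult, List.append_eq]
      linarith [score_append C p (fire C i v) q a]

/-- Invariant for the alternating play in the "infinite dihedral" case.
`A` is the value at the vertex about to be fired, `P` the value at the other vertex;
`d` is (minus) the off-diagonal coefficient of the active vertex, `c` that of the other. -/
def KInv (d c A P : ℝ) : Prop :=
  A < -1 ∧ 2*P + d*A ≤ 0 ∧ c + d + c*d < c*P^2 + d*A^2 + c*d*A*P

lemma KInv.lt {d c A P : ℝ} (hc : 1 ≤ c) (hd : 1 ≤ d) (h4 : 4 ≤ c*d)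
    (h : KInv d c A P) : P + d*A < -1 := by
  obtain ⟨h1, h2, h3⟩ := h
  by_contra hT
  push_neg at hT
  set T := P + d*A with hTdef
  have hform : c*P^2 + d*A^2 + c*d*A*P = c*T^2 - c*d*T*A + d*A^2 := by
    rw [hTdef]; ring
  have h2' : 2*T ≤ d*A := by rw [hTdef]; linarith
  have hT0 : T < 0 := by nlinarith
  have hT2 : T^2 ≤ 1 := by nlinarith
  have hA2 : 1 ≤ A^2 := by nlinarith
  have hTA : d*(A^2) ≤ 2*(T*A) := by nlinarith
  have hcd0 : (0:ℝ) < c*d := by linarith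
  have k1 : c*d*(d*(A^2)) ≤ c*d*(2*(T*A)) :=
    mul_le_mul_of_nonneg_left hTA (le_of_lt hcd0)
  have k2 : c*T^2 ≤ c*1 := mul_le_mul_of_nonneg_left hT2 (by linarith)
  have k3 : d*1 ≤ d*(A^2) := mul_le_mul_of_nonneg_left hA2 (by linarith)
  nlinarith [mul_le_mul_of_nonneg_left k3 (by linarith : (0:ℝ) ≤ c*d - 2)]

lemma KInv.step {d c A P : ℝ} (hc : 1 ≤ c) (hd : 1 ≤ d) (h4 : 4 ≤ c*d)
    (h : KInv d c A P) : KInv c d (P + d*A) (-A) := by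
  obtain ⟨h1, h2, h3⟩ := h
  refine ⟨KInv.lt hc hd h4 ⟨h1, h2, h3⟩, ?_, ?_⟩
  · nlinarith [mul_le_mul_of_nonneg_left h2 (by linarith : (0:ℝ) ≤ c),
      mul_nonneg (by linarith : (0:ℝ) ≤ c*d - 4) (by linarith : (0:ℝ) ≤ -A)]
  · have : d*(-A)^2 + c*(P + d*A)^2 + c*d*(P + d*A)*(-A)
        = c*P^2 + d*A^2 + c*d*A*P := by ring
    linarith

/-- Alternating list `[s, t, s, t, ...]` of length `n`. -/
def altL (s t : I) : ℕ → List I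
  | 0 => []
  | n+1 => s :: altL t s n

lemma altL_length (s t : I) : ∀ n, (altL s t n).length = n
  | 0 => rfl
  | n+1 => by simp [altL, altL_length t s n]

lemma alt_play (C : I → I → ℤ) : ∀ (n : ℕ) (s t : I), s ≠ t →
    ∀ w : I → ℝ, 1 ≤ -(C s t : ℝ) → 1 ≤ -(C t s : ℝ) →
    4 ≤ (-(C s t : ℝ)) * (-(C t s : ℝ)) →
    C s s = 2 → C t t = 2 →
    KInv (-(C s t : ℝ)) (-(C t s : ℝ)) (w s) (w t) →
    IsPlay C (-1) w (altL s t n)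
  | 0, _, _, _, _, _, _, _, _, _, _ => trivial
  | n+1, s, t, hst, w, hcs, hct, h4, hss, htt, hK => by
      refine ⟨hK.1, ?_⟩
      have hws : fire C s w s = -(w s) := by
        simp only [fire, hss]; push_cast; ring
      have hwt : fire C s w t = w t + (-(C s t : ℝ)) * (w s) := by
        simp only [fire]; ring
      have hK' : KInv (-(C t s : ℝ)) (-(C s t : ℝ)) (fire C s w t) (fire C s w s) := by
        rw [hws, hwt]
        exact KInv.step hct hcs (by linarith [mul_comm (-(C s t : ℝ)) (-(C t s : ℝ))]) hK
      exact alt_play C n t s hst.symm (fire C s w) hct hcs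
        (by linarith [mul_comm (-(C s t : ℝ)) (-(C t s : ℝ))]) htt hss hK'

set_option maxHeartbeats 1600000 in
lemma polygon (C : I → I → ℤ)
    (hdiag : ∀ i, C i i = 2)
    (hoff : ∀ i j, i ≠ j → C i j ≤ 0)
    (hzero : ∀ i j, C i j = 0 ↔ C j i = 0)
    (v : I → ℝ) (i j : I) (hij : i ≠ j) (hvi : v i < -1) (hvj : v j < -1) :
    (∀ n, ∃ r : List I, IsPlay C (-1) (fire C i v) r ∧ r.length = n) ∨
    ∃ tA tB : List I, IsPlay C (-1) (fire C i v) tA ∧ IsPlay C (-1) (fire C j v) tB ∧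
      tA.length = tB.length ∧
      playResult C v (i :: tA) = playResult C v (j :: tB) ∧
      score C v (i :: tA) = score C v (j :: tB) := by
  have ha0 : C i j ≤ 0 := hoff i j hij
  have hb0 : C j i ≤ 0 := hoff j i hij.symm
  by_cases h4 : 4 ≤ C i j * C j i
  · -- infinite dihedral case
    left
    have hane : C i j ≠ 0 := by intro h; rw [h] at h4; simp at h4
    have hbne : C j i ≠ 0 := by intro h; rw [h] at h4; simp at h4
    have ha1 : C i j ≤ -1 := by omega
    have hb1 : C j i ≤ -1 := by omega
    have hct : (1:ℝ) ≤ -(C i j : ℝ) := by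
      have : ((C i j : ℤ) : ℝ) ≤ -1 := by exact_mod_cast ha1
      linarith
    have hcs : (1:ℝ) ≤ -(C j i : ℝ) := by
      have : ((C j i : ℤ) : ℝ) ≤ -1 := by exact_mod_cast hb1
      linarith
    have h4R : (4:ℝ) ≤ (-(C j i : ℝ)) * (-(C i j : ℝ)) := by
      have : (4:ℝ) ≤ ((C i j * C j i : ℤ) : ℝ) := by exact_mod_cast h4
      push_cast at this; nlinarith [this]
    have hwj : fire C i v j = v j + (-(C i j : ℝ)) * v i := by simp only [fire]; ring
    have hwi : fire C i v i = -(v i) := by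
      simp only [fire, hdiag i]; push_cast; ring
    have hK : KInv (-(C j i : ℝ)) (-(C i j : ℝ)) (fire C i v j) (fire C i v i) := by
      rw [hwj, hwi]
      set c := -(C i j : ℝ) with hc
      set d := -(C j i : ℝ) with hd
      have hc0 : (0:ℝ) < c := by linarith
      have hd0 : (0:ℝ) < d := by linarith
      have hcd0 : (0:ℝ) < c * d := by positivity
      have hcd4 : (4:ℝ) ≤ c * d := by rw [mul_comm]; exact h4R
      have hx2 : (1:ℝ) < v i * v i := by nlinarith
      have hy2 : (1:ℝ) < v j * v j := by nlinarith
      have hxy : (1:ℝ) < v i * v j := by nlinarith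
      refine ⟨?_, ?_, ?_⟩
      · nlinarith [mul_nonneg (by linarith : (0:ℝ) ≤ c - 1) (by linarith : (0:ℝ) ≤ -1 - v i)]
      · nlinarith [mul_le_mul_of_nonneg_left (by linarith : v j ≤ -1) (le_of_lt hd0),
          mul_le_mul_of_nonneg_left (by linarith : v i ≤ -1) (by linarith : (0:ℝ) ≤ c*d - 2)]
      · nlinarith [mul_lt_mul_of_pos_left hx2 hc0, mul_lt_mul_of_pos_left hy2 hd0,
          mul_lt_mul_of_pos_left hxy hcd0]
    intro n
    exact ⟨altL j i n, alt_play C n j i hij.symm (fire C i v) hcs hct h4R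
      (hdiag j) (hdiag i) hK, altL_length j i n⟩
  · right
    push_neg at h4
    have ha3 : -3 ≤ C i j := by
      by_contra h
      push_neg at h
      have hbne : C j i ≠ 0 := fun h0 => by
        have := (hzero i j).mpr h0; omega
      nlinarith [mul_le_mul (show (4:ℤ) ≤ -C i j by omega)
        (show (1:ℤ) ≤ -C j i by omega) (by norm_num) (by omega)]
    have hb3 : -3 ≤ C j i := by
      by_contra h
      push_neg at h
      have hane : C i j ≠ 0 := fun h0 => by
        have := (hzero i j).mp h0; omega
      nlinarith [mul_le_mul (show (1:ℤ) ≤ -C i j by omega)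
        (show (4:ℤ) ≤ -C j i by omega) (by norm_num) (by omega)]
    obtain ⟨a, ha⟩ : ∃ a : ℤ, C i j = a := ⟨C i j, rfl⟩
    obtain ⟨b, hb⟩ : ∃ b : ℤ, C j i = b := ⟨C j i, rfl⟩
    have hz : a = 0 ↔ b = 0 := by rw [← ha, ← hb]; exact hzero i j
    rw [ha] at ha0 ha3
    rw [hb] at hb0 hb3
    rw [ha, hb] at h4
    interval_cases a <;> interval_cases b
    · omega
    · omega
    · refine ⟨[j, i, j, i, j], [i, j, i, j, i], ?_, ?_, rfl, ?_, ?_⟩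
      · simp only [IsPlay, fire, ha, hb, hdiag]
        push_cast
        repeat' apply And.intro
        all_goals first | trivial | linarith
      · simp only [IsPlay, fire, ha, hb, hdiag]
        push_cast
        repeat' apply And.intro
        all_goals first | trivial | linarith
      · funext k
        simp only [playResult, fire, ha, hb, hdiag]
        push_cast
        ring
      · funext k
        simp only [score, fire, ha, hb, hdiag]
        push_cast
        split_ifs <;> first | linarith | simp_all
    · exact absurd hz (by decide)
    · omega
    · omega
    · refine ⟨[j, i, j], [i, j, i], ?_, ?_, rfl, ?_, ?_⟩
      · simp only [IsPlay, fire, ha, hb, hdiag]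
        push_cast
        repeat' apply And.intro
        all_goals first | trivial | linarith
      · simp only [IsPlay, fire, ha, hb, hdiag]
        push_cast
        repeat' apply And.intro
        all_goals first | trivial | linarith
      · funext k
        simp only [playResult, fire, ha, hb, hdiag]
        push_cast
        ring
      · funext k
        simp only [score, fire, ha, hb, hdiag]
        push_cast
        split_ifs <;> first | linarith | simp_all
    · exact absurd hz (by decide)
    · refine ⟨[j, i, j, i, j], [i, j, i, j, i], ?_, ?_, rfl, ?_, ?_⟩
      · simp only [IsPlay, fire, ha, hb, hdiag]
        push_cast
        repeat' apply And.intro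
        all_goals first | trivial | linarith
      · simp only [IsPlay, fire, ha, hb, hdiag]
        push_cast
        repeat' apply And.intro
        all_goals first | trivial | linarith
      · funext k
        simp only [playResult, fire, ha, hb, hdiag]
        push_cast
        ring
      · funext k
        simp only [score, fire, ha, hb, hdiag]
        push_cast
        split_ifs <;> first | linarith | simp_all
    · refine ⟨[j, i, j], [i, j, i], ?_, ?_, rfl, ?_, ?_⟩
      · simp only [IsPlay, fire, ha, hb, hdiag]
        push_cast
        repeat' apply And.intro
        all_goals first | trivial | linarith
      · simp only [IsPlay, fire, ha, hb, hdiag]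
        push_cast
        repeat' apply And.intro
        all_goals first | trivial | linarith
      · funext k
        simp only [playResult, fire, ha, hb, hdiag]
        push_cast
        ring
      · funext k
        simp only [score, fire, ha, hb, hdiag]
        push_cast
        split_ifs <;> first | linarith | simp_all
    · refine ⟨[j, i], [i, j], ?_, ?_, rfl, ?_, ?_⟩
      · simp only [IsPlay, fire, ha, hb, hdiag]
        push_cast
        repeat' apply And.intro
        all_goals first | trivial | linarith
      · simp only [IsPlay, fire, ha, hb, hdiag]
        push_cast
        repeat' apply And.intro
        all_goals first | trivial | linarith
      · funext k
        simp only [playResult, fire, ha, hb, hdiag]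
        push_cast
        ring
      · funext k
        simp only [score, fire, ha, hb, hdiag]
        push_cast
        split_ifs <;> first | linarith | simp_all
    · exact absurd hz (by decide)
    · exact absurd hz (by decide)
    · exact absurd hz (by decide)
    · exact absurd hz (by decide)
    · refine ⟨[j], [i], ?_, ?_, rfl, ?_, ?_⟩
      · simp only [IsPlay, fire, ha, hb, hdiag]
        push_cast
        repeat' apply And.intro
        all_goals first | trivial | linarith
      · simp only [IsPlay, fire, ha, hb, hdiag]
        push_cast
        repeat' apply And.intro
        all_goals first | trivial | linarith
      · funext k
        simp only [playResult, fire, ha, hb, hdiag]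
        push_cast
        ring
      · funext k
        simp only [score, fire, ha, hb, hdiag]
        push_cast
        split_ifs <;> first | linarith | simp_all

lemma playResult_cons (C : I → I → ℤ) (v : I → ℝ) (i : I) (l : List I) :
    playResult C v (i :: l) = playResult C (fire C i v) l := rfl

lemma score_cons (C : I → I → ℤ) (v : I → ℝ) (i : I) (l : List I) (a : I) :
    score C v (i :: l) a = (if a = i then v i else 0) + score C (fire C i v) l a := rfl

lemma ext_play (C : I → I → ℤ)
    (hdiag : ∀ i, C i i = 2) (hoff : ∀ i j, i ≠ j → C i j ≤ 0)
    (hzero : ∀ i j, C i j = 0 ↔ C j i = 0) :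
    ∀ n : ℕ, ∀ v : I → ℝ, ∀ p : List I, IsPlay C (-1) v p →
      (∀ k, -1 ≤ playResult C v p k) → p.length = n →
      ∀ r : List I, IsPlay C (-1) v r →
      ∃ e : List I, IsPlay C (-1) v (r ++ e) ∧
        (∀ k, -1 ≤ playResult C v (r ++ e) k) ∧ r.length + e.length = n := by
  intro n
  induction n using Nat.strong_induction_on with
  | _ n IH =>
  intro v p hp hpend hlen r hr
  cases p with
  | nil =>
    cases r with
    | nil =>
      refine ⟨[], trivial, hpend, ?_⟩
      simp only [List.length_nil] at hlen ⊢
      omega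
    | cons jj r' =>
      have h1 : v jj < -1 := hr.1
      have h2 : -1 ≤ v jj := hpend jj
      linarith
  | cons ii p' =>
    have hn' : p'.length + 1 = n := by simpa using hlen
    have hvi : v ii < -1 := hp.1
    have hpend' : ∀ k, -1 ≤ playResult C (fire C ii v) p' k := hpend
    cases r with
    | nil =>
      refine ⟨ii :: p', hp, hpend, ?_⟩
      simp only [List.length_nil, List.length_cons]
      omega
    | cons jj r' =>
      have hvj : v jj < -1 := hr.1
      by_cases hji : jj = ii
      · subst hji
        obtain ⟨e, he1, he2, he3⟩ :=
          IH p'.length (by omega) (fire C jj v) p' hp.2 hpend' rfl r' hr.2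
        refine ⟨e, ⟨hvj, he1⟩, he2, ?_⟩
        simp only [List.length_cons, List.length_append] at he3 ⊢
        omega
      · have hij' : ii ≠ jj := fun h => hji h.symm
        rcases polygon C hdiag hoff hzero v ii jj hij' hvi hvj with
          hinf | ⟨tA, tB, htA, htB, hlenAB, hres, hsc⟩
        · obtain ⟨rr, hrr, hrrlen⟩ := hinf (p'.length + 1)
          obtain ⟨e, _, _, he3⟩ :=
            IH p'.length (by omega) (fire C ii v) p' hp.2 hpend' rfl rr hrr
          omega
        · have hres' : playResult C (fire C jj v) tB = playResult C (fire C ii v) tA := by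
            rw [← playResult_cons, ← playResult_cons]
            exact hres.symm
          obtain ⟨e0, he0p, he0end, he0len⟩ :=
            IH p'.length (by omega) (fire C ii v) p' hp.2 hpend' rfl tA htA
          have htBe : IsPlay C (-1) (fire C jj v) (tB ++ e0) := by
            rw [isPlay_append]
            exact ⟨htB, by rw [hres']; exact ((isPlay_append C (-1) tA _ e0).mp he0p).2⟩
          have hBend : ∀ k, -1 ≤ playResult C (fire C jj v) (tB ++ e0) k := by
            intro k
            rw [playResult_append, hres', ← playResult_append]
            exact he0end k
          obtain ⟨e, he1, he2, he3⟩ :=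
            IH p'.length (by omega) (fire C jj v) (tB ++ e0) htBe hBend
              (by simp only [List.length_append]; omega) r' hr.2
          refine ⟨e, ⟨hvj, he1⟩, he2, ?_⟩
          simp only [List.length_cons, List.length_append] at he3 ⊢
          omega

lemma score_eq (C : I → I → ℤ)
    (hdiag : ∀ i, C i i = 2) (hoff : ∀ i j, i ≠ j → C i j ≤ 0)
    (hzero : ∀ i j, C i j = 0 ↔ C j i = 0) :
    ∀ n : ℕ, ∀ v : I → ℝ, ∀ p q : List I, IsPlay C (-1) v p →
      (∀ k, -1 ≤ playResult C v p k) → IsPlay C (-1) v q →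
      (∀ k, -1 ≤ playResult C v q k) → p.length = n →
      score C v p = score C v q := by
  intro n
  induction n using Nat.strong_induction_on with
  | _ n IH =>
  intro v p q hp hpend hq hqend hlen
  cases p with
  | nil =>
    cases q with
    | nil => rfl
    | cons jj q' =>
      have h1 : v jj < -1 := hq.1
      have h2 : -1 ≤ v jj := hpend jj
      linarith
  | cons ii p' =>
    cases q with
    | nil =>
      have h1 : v ii < -1 := hp.1
      have h2 : -1 ≤ v ii := hqend ii
      linarith
    | cons jj q' =>
      have hn' : p'.length + 1 = n := by simpa using hlen
      have hpend' : ∀ k, -1 ≤ playResult C (fire C ii v) p' k := hpend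
      have hqend' : ∀ k, -1 ≤ playResult C (fire C jj v) q' k := hqend
      by_cases hji : jj = ii
      · subst hji
        have hs := IH p'.length (by omega) (fire C jj v) p' q' hp.2 hpend' hq.2 hqend' rfl
        funext a
        rw [score_cons, score_cons, hs]
      · have hij' : ii ≠ jj := fun h => hji h.symm
        rcases polygon C hdiag hoff hzero v ii jj hij' hp.1 hq.1 with
          hinf | ⟨tA, tB, htA, htB, hlenAB, hres, hsc⟩
        · obtain ⟨rr, hrr, hrrlen⟩ := hinf (p'.length + 1)
          obtain ⟨e, _, _, he3⟩ :=
            ext_play C hdiag hoff hzero p'.length (fire C ii v) p' hp.2 hpend' rfl rr hrr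
          omega
        · have hres' : playResult C (fire C jj v) tB = playResult C (fire C ii v) tA := by
            rw [← playResult_cons, ← playResult_cons]
            exact hres.symm
          obtain ⟨e0, he0p, he0end, he0len⟩ :=
            ext_play C hdiag hoff hzero p'.length (fire C ii v) p' hp.2 hpend' rfl tA htA
          have htBe : IsPlay C (-1) (fire C jj v) (tB ++ e0) := by
            rw [isPlay_append]
            exact ⟨htB, by rw [hres']; exact ((isPlay_append C (-1) tA _ e0).mp he0p).2⟩
          have hBend : ∀ k, -1 ≤ playResult C (fire C jj v) (tB ++ e0) k := by
            intro k
            rw [playResult_append, hres', ← playResult_append]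
            exact he0end k
          have h1 : score C (fire C ii v) p' = score C (fire C ii v) (tA ++ e0) :=
            IH p'.length (by omega) (fire C ii v) p' (tA ++ e0) hp.2 hpend' he0p he0end rfl
          have h2 : score C (fire C jj v) (tB ++ e0) = score C (fire C jj v) q' :=
            IH p'.length (by omega) (fire C jj v) (tB ++ e0) q' htBe hBend hq.2 hqend'
              (by simp only [List.length_append]; omega)
          funext a
          calc score C v (ii :: p') a
              = score C v (ii :: (tA ++ e0)) a := by rw [score_cons, score_cons, h1]
            _ = score C v ((ii :: tA) ++ e0) a := rfl
            _ = score C v (ii :: tA) a + score C (playResult C v (ii :: tA)) e0 a :=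
                score_append C (ii :: tA) v e0 a
            _ = score C v (jj :: tB) a + score C (playResult C v (jj :: tB)) e0 a := by
                rw [congrFun hsc a, hres]
            _ = score C v ((jj :: tB) ++ e0) a := (score_append C (jj :: tB) v e0 a).symm
            _ = score C v (jj :: (tB ++ e0)) a := rfl
            _ = score C v (jj :: q') a := by rw [score_cons, score_cons, h2]

end NG

/-- If two `(<-1)`-plays from `v` each end at a configuration with no coordinate `< -1`,
then they have the same score vector. -/
theorem lt_neg_one_play_score_vector
    {I : Type*} [Fintype I] [DecidableEq I] [Nonempty I] (C : I → I → ℤ)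
    (hdiag : ∀ i, C i i = 2)
    (hoff : ∀ i j, i ≠ j → C i j ≤ 0)
    (hzero : ∀ i j, C i j = 0 ↔ C j i = 0)
    (v : I → ℝ) (p q : List I)
    (hp : IsPlay C (-1) v p) (hpend : ∀ j, -1 ≤ playResult C v p j)
    (hq : IsPlay C (-1) v q) (hqend : ∀ j, -1 ≤ playResult C v q j) :
    score C v p = score C v q :=
  NG.score_eq C hdiag hoff hzero p.length v p q hp hpend hq hqend rfl
end

section
/- Let n ≥ 3. For every j ∈ ZMod n there exists exactly one element w ∈ W such that, for some graph automorphism γ of the cycle ZMod n, one has w(v) = T_j(v ∘ γ) for every configuration v : ZMod n → ℝ. (The element t_j := w acts as the translation T_j composed with a permutation of coordinates coming from an automorphism of the extended Dynkin graph.) -/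
/-- The affine Cartan matrix of type `Ã_{n-1}`, indexed by `ZMod n`. -/
def A (n : ℕ) (i j : ZMod n) : ℤ :=
  if i = j then 2 else if j = i + 1 ∨ j = i - 1 then -1 else 0

/-- Firing vertex `i` in type `Ã_{n-1}` (as a map on configurations). -/
def fireF (n : ℕ) (i : ZMod n) (v : ZMod n → ℝ) : ZMod n → ℝ :=
  fun j => v j - (A n i j : ℝ) * v i

lemma fireF_invol (n : ℕ) (i : ZMod n) (v : ZMod n → ℝ) :
    fireF n i (fireF n i v) = v := by
  funext j
  have h : A n i i = 2 := by simp [A]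
  simp only [fireF]
  push_cast [h]
  ring

/-- The simple reflection `s_i` as a linear automorphism of configuration space. -/
noncomputable def sRefl (n : ℕ) (i : ZMod n) : (ZMod n → ℝ) ≃ₗ[ℝ] (ZMod n → ℝ) where
  toFun := fireF n i
  invFun := fireF n i
  left_inv v := fireF_invol n i v
  right_inv v := fireF_invol n i v
  map_add' x y := by funext j; simp [fireF]; ring
  map_smul' c x := by funext j; simp [fireF]; ring

/-- The affine Weyl group of type `Ã_{n-1}` in its reflection representation
(in the basis of fundamental coweights). -/
noncomputable def affWeyl (n : ℕ) : Subgroup ((ZMod n → ℝ) ≃ₗ[ℝ] (ZMod n → ℝ)) :=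
  Subgroup.closure (Set.range (sRefl n))

/-- The translation `T_j(v) = v + (Σ_i v i)·(e_j - e_0)`. -/
def Tmap (n : ℕ) [NeZero n] (j : ZMod n) (v : ZMod n → ℝ) : ZMod n → ℝ :=
  fun x => v x + (∑ i : ZMod n, v i) *
    ((if x = j then (1 : ℝ) else 0) - (if x = 0 then (1 : ℝ) else 0))


set_option linter.unusedSectionVars false
set_option linter.unusedVariables false

section helpers
variable {n : ℕ} [NeZero n]

lemma oneNeZero (hn : 3 ≤ n) : (1 : ZMod n) ≠ 0 := by
  haveI : Fact (1 < n) := ⟨by omega⟩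
  exact one_ne_zero

lemma castinj (hn : 3 ≤ n) {a b : ℕ} (ha : a < n) (hb : b < n) :
    ((a : ZMod n) = (b : ZMod n)) ↔ a = b := by
  constructor
  · intro h
    have := congrArg ZMod.val h
    rwa [ZMod.val_cast_of_lt ha, ZMod.val_cast_of_lt hb] at this
  · rintro rfl; rfl

lemma castne (hn : 3 ≤ n) {a b : ℕ} (ha : a < n) (hb : b < n) (hne : a ≠ b) :
    ((a : ZMod n) ≠ (b : ZMod n)) := fun h => hne ((castinj hn ha hb).mp h)

lemma sRefl_apply (i : ZMod n) (v : ZMod n → ℝ) (x : ZMod n) :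
    sRefl n i v x = v x - (A n i x : ℝ) * v i := rfl

lemma mul_apply' (a b : (ZMod n → ℝ) ≃ₗ[ℝ] (ZMod n → ℝ)) (v : ZMod n → ℝ) :
    (a * b) v = a (b v) := rfl

lemma A_self (i : ZMod n) : A n i i = 2 := by simp [A]

lemma A_right (hn : 3 ≤ n) (i : ZMod n) : A n i (i + 1) = -1 := by
  have h : i ≠ i + 1 := by
    intro h; exact oneNeZero hn (left_eq_add.mp h)
  simp [A, h]

lemma A_left (hn : 3 ≤ n) (i : ZMod n) : A n i (i - 1) = -1 := by
  have h : i ≠ i - 1 := by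
    intro h
    have : i - 1 + 1 = i - 1 := by nth_rewrite 2 [← h]; rw [sub_add_cancel]
    exact oneNeZero hn (left_eq_add.mp this.symm)
  simp [A, h]

lemma A_zero {i j : ZMod n} (h1 : j ≠ i) (h2 : j ≠ i + 1) (h3 : j ≠ i - 1) :
    A n i j = 0 := by
  simp [A, h1.symm, h2, h3]

lemma A_shift (i j m : ZMod n) : A n (i + m) (j + m) = A n i j := by
  have e1 : (i + m = j + m) ↔ i = j := add_left_inj m
  have e2 : (j + m = i + m + 1) ↔ j = i + 1 := by
    rw [show i + m + 1 = (i+1) + m by ring, add_left_inj]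
  have e3 : (j + m = i + m - 1) ↔ j = i - 1 := by
    rw [show i + m - 1 = (i-1) + m by ring, add_left_inj]
  simp only [A, e1, e2, e3]

end helpers

lemma cast_big {n : ℕ} [NeZero n] (b : ℕ) (hb0 : 0 < b) (hb : b ≤ n) :
    ∃ a : ℕ, a < n ∧ ((b:ℕ):ZMod n) = (a : ZMod n) ∧ (a = b ∨ (a = 0 ∧ b = n)) := by
  by_cases h : b = n
  · subst h
    exact ⟨0, by omega, by simp [ZMod.natCast_self], Or.inr ⟨rfl, rfl⟩⟩
  · exact ⟨b, by omega, rfl, Or.inl rfl⟩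

noncomputable def Qc (n : ℕ) : ℕ → ((ZMod n → ℝ) ≃ₗ[ℝ] (ZMod n → ℝ))
  | 0 => sRefl n ((2:ℕ) : ZMod n)
  | (r+1) => sRefl n (((r+3 : ℕ)) : ZMod n) * Qc n r

lemma Qc_mem (n : ℕ) (r : ℕ) : Qc n r ∈ affWeyl n := by
  induction r with
  | zero => exact Subgroup.subset_closure ⟨_, rfl⟩
  | succ r ih => exact mul_mem (Subgroup.subset_closure ⟨_, rfl⟩) ih

lemma Qc_apply {n : ℕ} [NeZero n] (hn : 3 ≤ n) :
    ∀ (r : ℕ), r + 3 ≤ n → ∀ (v : ZMod n → ℝ) (x : ZMod n),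
    Qc n r v x =
      if x = ((1:ℕ) : ZMod n) then v ((1:ℕ) : ZMod n) + v ((2:ℕ):ZMod n)
      else if x = ((r+2 : ℕ) : ZMod n) then
        -(∑ c ∈ Finset.Ico 2 (r+3), v ((c : ℕ) : ZMod n))
      else if x = ((r+3 : ℕ) : ZMod n) then
        v x + ∑ c ∈ Finset.Ico 2 (r+3), v ((c : ℕ) : ZMod n)
      else if 2 ≤ x.val ∧ x.val < r + 2 then v (x + 1)
      else v x := by
  intro r
  induction r with
  | zero =>
    intro hr v x
    have hsum : (∑ c ∈ Finset.Ico 2 (0+3), v ((c : ℕ) : ZMod n)) = v ((2:ℕ) : ZMod n) := by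
      rw [show (0+3) = 2 + 1 by rfl, Finset.sum_Ico_succ_top (by omega), Finset.Ico_self,
        Finset.sum_empty, zero_add]
    rw [hsum]
    show v x - (A n ((2:ℕ):ZMod n) x : ℝ) * v ((2:ℕ):ZMod n) = _
    obtain ⟨a, halt, haeq, hacase⟩ := cast_big (n := n) 3 (by omega) (by omega)
    have haeq : ((0+3:ℕ):ZMod n) = (a:ZMod n) := haeq
    by_cases h1 : x = ((1:ℕ) : ZMod n)
    · have hA : A n ((2:ℕ):ZMod n) x = -1 := by
        rw [h1, show ((1:ℕ) : ZMod n) = ((2:ℕ):ZMod n) - 1 by push_cast; ring]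
        exact A_left hn _
      rw [if_pos h1, hA, h1]; push_cast; ring
    · by_cases h2 : x = ((0+2:ℕ) : ZMod n)
      · have hA : A n ((2:ℕ):ZMod n) x = 2 := by rw [h2]; exact A_self _
        rw [if_neg h1, if_pos h2, hA, h2]; push_cast; ring
      · by_cases h3 : x = ((0+3:ℕ) : ZMod n)
        · have hA : A n ((2:ℕ):ZMod n) x = -1 := by
            rw [h3, show ((0+3:ℕ) : ZMod n) = ((2:ℕ):ZMod n) + 1 by push_cast; ring]
            exact A_right hn _
          rw [if_neg h1, if_neg h2, if_pos h3, hA]; push_cast; ring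
        · have hA : A n ((2:ℕ):ZMod n) x = 0 := by
            refine A_zero (fun h => h2 (by rw [h])) (fun h => h3 ?_) (fun h => h1 ?_)
            · rw [h, show ((2:ℕ):ZMod n) + 1 = ((0+3:ℕ):ZMod n) by push_cast; ring]
            · rw [h, show ((2:ℕ):ZMod n) - 1 = ((1:ℕ):ZMod n) by push_cast; ring]
          rw [if_neg h1, if_neg h2, if_neg h3, if_neg (by omega), hA]; push_cast; ring
  | succ r ih =>
    intro hr v x
    have hr' : r + 3 ≤ n := by omega
    set i : ZMod n := ((r+3:ℕ) : ZMod n) with hi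
    obtain ⟨a, halt, haeq, hacase⟩ := cast_big (n := n) (r+4) (by omega) (by omega)
    have hip1 : i + 1 = ((r+4:ℕ) : ZMod n) := by rw [hi]; push_cast; ring
    have him1 : i - 1 = ((r+2:ℕ) : ZMod n) := by rw [hi]; push_cast; ring
    have hQi : Qc n r v i = v i + ∑ c ∈ Finset.Ico 2 (r+3), v ((c : ℕ) : ZMod n) := by
      rw [ih hr' v i]
      rw [if_neg (castne hn (by omega) (by omega) (by omega)),
        if_neg (castne hn (by omega) (by omega) (by omega)), if_pos rfl]
    have hsum : ∑ c ∈ Finset.Ico 2 (r+4), v ((c : ℕ) : ZMod n)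
        = (∑ c ∈ Finset.Ico 2 (r+3), v ((c : ℕ) : ZMod n)) + v i := by
      rw [show r+4 = (r+3)+1 from rfl, Finset.sum_Ico_succ_top (by omega)]
    show Qc n r v x - (A n i x : ℝ) * Qc n r v i = _
    by_cases h1 : x = ((1:ℕ) : ZMod n)
    · have hA : A n i x = 0 := by
        refine A_zero ?_ ?_ ?_
        · rw [h1, hi]; exact castne hn (by omega) (by omega) (by omega)
        · rw [h1, hip1, haeq]
          rcases hacase with h | ⟨h, _⟩ <;> subst h <;>
            exact castne hn (by omega) (by omega) (by omega)
        · rw [h1, him1]; exact castne hn (by omega) (by omega) (by omega)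
      rw [hA, ih hr' v x, if_pos h1, if_pos h1]
      push_cast; ring
    · by_cases h2 : x = ((r+1+2:ℕ) : ZMod n)
      · have h2' : x = ((r+3:ℕ) : ZMod n) := h2
        have hA : A n i x = 2 := by rw [h2', ← hi]; exact A_self _
        rw [hA, ih hr' v x, if_neg h1,
          if_neg (by rw [h2']; exact castne hn (by omega) (by omega) (by omega)),
          if_pos h2', if_neg h1, if_pos h2]
        rw [hQi, h2', ← hi, show r+1+3 = r+4 from rfl, hsum]
        push_cast; ring
      · by_cases h3 : x = ((r+1+3:ℕ) : ZMod n)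
        · have h3' : x = ((r+4:ℕ) : ZMod n) := h3
          have hA : A n i x = -1 := by rw [h3', ← hip1]; exact A_right hn _
          have hna2 : x ≠ ((r+2:ℕ):ZMod n) := by
            rw [h3', haeq]
            rcases hacase with h | ⟨h, _⟩ <;> subst h <;>
              exact castne hn (by omega) (by omega) (by omega)
          have hna3 : x ≠ ((r+3:ℕ):ZMod n) := by
            rw [h3', haeq]
            rcases hacase with h | ⟨h, _⟩ <;> subst h <;>
              exact castne hn (by omega) (by omega) (by omega)
          have hnav : ¬(2 ≤ x.val ∧ x.val < r+2) := by
            rw [h3', haeq]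
            rcases hacase with h | ⟨h, _⟩ <;> subst h <;>
              rw [ZMod.val_cast_of_lt halt] <;> omega
          have hQx : Qc n r v x = v x := by
            rw [ih hr' v x, if_neg h1, if_neg hna2, if_neg hna3, if_neg hnav]
          rw [hA, hQx, if_neg h1, if_neg hna3,
            if_pos h3, show r+1+3 = r+4 from rfl, hsum, hQi, h3', ← hip1]
          push_cast; ring
        · by_cases h4 : x = ((r+2:ℕ) : ZMod n)
          · have hA : A n i x = -1 := by rw [h4, ← him1]; exact A_left hn _
            have hQx : Qc n r v x
                = -(∑ c ∈ Finset.Ico 2 (r+3), v ((c : ℕ) : ZMod n)) := by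
              rw [ih hr' v x, if_neg h1, if_pos h4]
            have hx1 : x + 1 = i := by rw [h4, hi]; push_cast; ring
            have hval : x.val = r + 2 := by rw [h4, ZMod.val_cast_of_lt (by omega)]
            rw [hA, hQx, hQi, if_neg h1, if_neg h2, if_neg h3, if_pos (by omega), hx1]
            push_cast; ring
          · have hA : A n i x = 0 :=
              A_zero (fun h => h2 h) (fun h => h3 (by rw [hip1] at h; exact h))
                (fun h => h4 (by rw [him1] at h; exact h))
            have hxv : ((x.val : ℕ) : ZMod n) = x := ZMod.natCast_rightInverse x
            have hvne : x.val ≠ r+2 := fun h => h4 (by rw [← hxv, h])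
            have hiff : (2 ≤ x.val ∧ x.val < r+2) ↔ (2 ≤ x.val ∧ x.val < r+1+2) := by
              omega
            rw [hA, ih hr' v x, if_neg h1, if_neg h4, if_neg (fun h => h2 h),
              if_neg h1, if_neg h2, if_neg h3]
            simp only [hiff]
            push_cast; ring

noncomputable def Qm (n : ℕ) (m : ZMod n) : ℕ → ((ZMod n → ℝ) ≃ₗ[ℝ] (ZMod n → ℝ))
  | 0 => sRefl n (m + ((2:ℕ) : ZMod n))
  | (r+1) => sRefl n (m + ((r+3 : ℕ) : ZMod n)) * Qm n m r

lemma Qm_mem (n : ℕ) (m : ZMod n) (r : ℕ) : Qm n m r ∈ affWeyl n := by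
  induction r with
  | zero => exact Subgroup.subset_closure ⟨_, rfl⟩
  | succ r ih => exact mul_mem (Subgroup.subset_closure ⟨_, rfl⟩) ih

lemma A_shift' {n : ℕ} [NeZero n] (c m x : ZMod n) : A n (m + c) x = A n c (x - m) := by
  have := A_shift c (x - m) m
  rwa [sub_add_cancel, add_comm c m] at this

lemma Qm_apply {n : ℕ} [NeZero n] (m : ZMod n) (r : ℕ) (v : ZMod n → ℝ) (x : ZMod n) :
    Qm n m r v x = Qc n r (fun y => v (y + m)) (x - m) := by
  induction r generalizing x with
  | zero =>
    show v x - (A n (m + ((2:ℕ):ZMod n)) x : ℝ) * v (m + ((2:ℕ):ZMod n)) = _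
    rw [A_shift']
    show _ = v (x - m + m) - (A n ((2:ℕ):ZMod n) (x - m) : ℝ) * v (((2:ℕ):ZMod n) + m)
    rw [sub_add_cancel, add_comm]
  | succ r ih =>
    show Qm n m r v x - (A n (m + ((r+3:ℕ):ZMod n)) x : ℝ) * Qm n m r v (m + ((r+3:ℕ):ZMod n))
      = _
    rw [A_shift', ih, ih]
    show _ = Qc n r _ (x - m) - (A n ((r+3:ℕ):ZMod n) (x-m) : ℝ) * Qc n r _ ((r+3:ℕ):ZMod n)
    rw [add_sub_cancel_left]

noncomputable def Gc (n : ℕ) (m : ZMod n) : (ZMod n → ℝ) ≃ₗ[ℝ] (ZMod n → ℝ) :=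
  sRefl n m * Qm n m (n-3)

lemma Gc_mem (n : ℕ) (m : ZMod n) : Gc n m ∈ affWeyl n :=
  mul_mem (Subgroup.subset_closure ⟨_, rfl⟩) (Qm_mem n m _)

lemma sum_shift {n : ℕ} [NeZero n] (v : ZMod n → ℝ) (m : ZMod n) :
    ∑ x : ZMod n, v (x + m) = ∑ x : ZMod n, v x :=
  Fintype.sum_equiv (Equiv.addRight m) _ _ (fun _ => rfl)

lemma sum_cast_range {n : ℕ} [NeZero n] (v : ZMod n → ℝ) :
    ∑ x : ZMod n, v x = ∑ c ∈ Finset.range n, v ((c : ℕ) : ZMod n) := by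
  rw [Finset.sum_bij (fun (x : ZMod n) (_ : x ∈ Finset.univ) => x.val)]
  · intro x _; exact Finset.mem_range.mpr (ZMod.val_lt x)
  · intro x _ y _ h; exact ZMod.val_injective n h
  · intro c hc; exact ⟨(c : ZMod n), Finset.mem_univ _,
      ZMod.val_cast_of_lt (Finset.mem_range.mp hc)⟩
  · intro x _; rw [ZMod.natCast_rightInverse x]

lemma sum_split {n : ℕ} [NeZero n] (hn : 3 ≤ n) (v : ZMod n → ℝ) :
    ∑ x : ZMod n, v x = v ((0:ℕ) : ZMod n) + v ((1:ℕ) : ZMod n)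
      + ∑ c ∈ Finset.Ico 2 n, v ((c : ℕ) : ZMod n) := by
  rw [sum_cast_range, Finset.range_eq_Ico,
    ← Finset.sum_Ico_consecutive _ (Nat.zero_le 2) (by omega : 2 ≤ n),
    ← Finset.range_eq_Ico]
  congr 1
  rw [Finset.sum_range_succ, Finset.sum_range_one]

lemma castm1 {n : ℕ} [NeZero n] (hn : 3 ≤ n) : ((n-1 : ℕ) : ZMod n) = -1 := by
  have h : ((n-1+1:ℕ) : ZMod n) = 0 := by
    rw [show n-1+1 = n by omega, ZMod.natCast_self]
  push_cast at h
  exact eq_neg_of_add_eq_zero_left h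

lemma Gc_apply {n : ℕ} [NeZero n] (hn : 3 ≤ n) (m : ZMod n) (v : ZMod n → ℝ) (x : ZMod n) :
    Gc n m v x = v (x + 1) + (∑ i : ZMod n, v i) *
      ((if x = m + 1 then (1:ℝ) else 0) - (if x = m then (1:ℝ) else 0)) := by
  have key : ∀ w : ZMod n → ℝ, ∀ z : ZMod n,
      Qc n (n-3) w z =
      if z = ((1:ℕ) : ZMod n) then w ((1:ℕ) : ZMod n) + w ((2:ℕ):ZMod n)
      else if z = ((n-1 : ℕ) : ZMod n) then
        -(∑ c ∈ Finset.Ico 2 n, w ((c : ℕ) : ZMod n))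
      else if z = 0 then
        w z + ∑ c ∈ Finset.Ico 2 n, w ((c : ℕ) : ZMod n)
      else if 2 ≤ z.val ∧ z.val < n - 1 then w (z + 1)
      else w z := by
    intro w z
    have := Qc_apply hn (n-3) (by omega) w z
    rwa [show n-3+2 = n-1 by omega, show n-3+3 = n by omega, ZMod.natCast_self] at this
  set w : ZMod n → ℝ := fun y => v (y + m) with hw
  have hsig : ∑ i : ZMod n, v i
      = w 0 + w ((1:ℕ):ZMod n) + ∑ c ∈ Finset.Ico 2 n, w ((c : ℕ) : ZMod n) := by
    have h := sum_split hn w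
    rw [Nat.cast_zero] at h
    rw [← sum_shift v m]
    exact h
  have hQ0 : Qm n m (n-3) v m = w 0 + ∑ c ∈ Finset.Ico 2 n, w ((c : ℕ) : ZMod n) := by
    rw [Qm_apply, ← hw, sub_self, key w 0,
      if_neg (by rw [← Nat.cast_zero]; exact castne hn (by omega) (by omega) (by omega)),
      if_neg (by rw [← Nat.cast_zero]; exact castne hn (by omega) (by omega) (by omega)),
      if_pos rfl]
  show Qm n m (n-3) v x - (A n m x : ℝ) * Qm n m (n-3) v m = _
  rw [hQ0, Qm_apply, ← hw, show A n m x = A n (m + 0) x by rw [add_zero], A_shift' 0 m x]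
  set z : ZMod n := x - m with hz
  have hxz : x = z + m := by rw [hz, sub_add_cancel]
  have hone : ((1:ℕ) : ZMod n) = (1 : ZMod n) := Nat.cast_one
  have hiff1 : z = (1:ZMod n) ↔ x = m + 1 := by
    rw [hz, sub_eq_iff_eq_add, add_comm (1:ZMod n) m]
  have hiff0 : z = (0:ZMod n) ↔ x = m := by rw [hz, sub_eq_zero]
  by_cases h1 : z = ((1:ℕ) : ZMod n)
  · have hA : A n 0 z = -1 := by
      rw [h1, hone, show (1:ZMod n) = 0 + 1 from (zero_add 1).symm]
      exact A_right hn 0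
    have hx1 : x = m + 1 := hiff1.mp (by rw [← hone]; exact h1)
    have hz0 : z ≠ 0 := by
      rw [h1, ← Nat.cast_zero]
      exact castne hn (by omega) (by omega) (by omega)
    have hx0 : x ≠ m := fun hc => hz0 (hiff0.mpr hc)
    have hvx1 : v (x + 1) = w ((2:ℕ):ZMod n) := by
      show _ = v (((2:ℕ):ZMod n) + m)
      congr 1
      rw [hxz, h1]; push_cast; ring
    rw [key w z, if_pos h1, hA, hsig, if_pos hx1, if_neg hx0, hvx1]
    push_cast; ring
  · by_cases h2 : z = ((n-1:ℕ) : ZMod n)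
    · have hA : A n 0 z = -1 := by
        rw [h2, castm1 hn, show (-1:ZMod n) = 0 - 1 from (zero_sub 1).symm]
        exact A_left hn 0
      have hx1 : x ≠ m + 1 := fun hc => h1 (by rw [hone]; exact hiff1.mpr hc)
      have hz0 : z ≠ 0 := by
        rw [h2, ← Nat.cast_zero]
        exact castne hn (by omega) (by omega) (by omega)
      have hx0 : x ≠ m := fun hc => hz0 (hiff0.mpr hc)
      have hvx1 : v (x + 1) = w 0 := by
        show _ = v (0 + m)
        congr 1
        rw [hxz, h2, castm1 hn]; ring
      rw [key w z, if_neg h1, if_pos h2, hA, if_neg hx1, if_neg hx0, hvx1]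
      push_cast; ring
    · by_cases h3 : z = (0 : ZMod n)
      · have hA : A n 0 z = 2 := by rw [h3]; exact A_self 0
        have hx0 : x = m := hiff0.mp h3
        have hx1 : x ≠ m + 1 := fun hc => h1 (by rw [hone]; exact hiff1.mpr hc)
        have hvx1 : v (x + 1) = w ((1:ℕ):ZMod n) := by
          show _ = v (((1:ℕ):ZMod n) + m)
          congr 1
          rw [hxz, h3]; push_cast; ring
        rw [key w z, if_neg h1, if_neg h2, if_pos h3,
          hA, hsig, if_neg hx1, if_pos hx0, hvx1, h3]
        push_cast; ring
      · have hzv : ((z.val : ℕ) : ZMod n) = z := ZMod.natCast_rightInverse z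
        have hv0 : z.val ≠ 0 := fun hc => h3 (by rw [← hzv, hc, Nat.cast_zero])
        have hv1 : z.val ≠ 1 := fun hc => h1 (by rw [← hzv, hc])
        have hvn1 : z.val ≠ n - 1 := fun hc => h2 (by rw [← hzv, hc])
        have hvlt : z.val < n := ZMod.val_lt z
        have hA : A n 0 z = 0 := by
          refine A_zero h3 (fun hc => h1 ?_) (fun hc => h2 ?_)
          · rw [hc, zero_add, hone]
          · rw [hc, zero_sub, castm1 hn]
        have hx1 : x ≠ m + 1 := fun hc => h1 (by rw [hone]; exact hiff1.mpr hc)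
        have hx0 : x ≠ m := fun hc => h3 (hiff0.mpr hc)
        have hvx1 : v (x + 1) = w (z + 1) := by
          show _ = v ((z + 1) + m)
          congr 1
          rw [hxz]; ring
        rw [key w z, if_neg h1, if_neg h2, if_neg h3,
          if_pos (⟨by omega, by omega⟩ : 2 ≤ z.val ∧ z.val < n - 1),
          hA, if_neg hx1, if_neg hx0, hvx1]
        push_cast; ring

noncomputable def Wc (n : ℕ) : ℕ → ((ZMod n → ℝ) ≃ₗ[ℝ] (ZMod n → ℝ))
  | 0 => 1
  | (k+1) => Wc n k * Gc n ((2*k : ℕ) : ZMod n)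

lemma Wc_mem (n : ℕ) (k : ℕ) : Wc n k ∈ affWeyl n := by
  induction k with
  | zero => exact one_mem _
  | succ k ih => exact mul_mem ih (Gc_mem n _)

lemma sum_Gc {n : ℕ} [NeZero n] (hn : 3 ≤ n) (m : ZMod n) (v : ZMod n → ℝ) :
    ∑ x : ZMod n, Gc n m v x = ∑ x : ZMod n, v x := by
  have h : ∀ x : ZMod n, Gc n m v x = v (x + 1) + (∑ i : ZMod n, v i) *
      ((if x = m + 1 then (1:ℝ) else 0) - (if x = m then (1:ℝ) else 0)) :=
    fun x => Gc_apply hn m v x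
  rw [Finset.sum_congr rfl (fun x _ => h x), Finset.sum_add_distrib, sum_shift v 1,
    ← Finset.mul_sum]
  have h2 : ∑ x : ZMod n, ((if x = m + 1 then (1:ℝ) else 0) - (if x = m then (1:ℝ) else 0))
      = 0 := by
    rw [Finset.sum_sub_distrib, Finset.sum_ite_eq' Finset.univ (m+1) (fun _ => (1:ℝ)),
      Finset.sum_ite_eq' Finset.univ m (fun _ => (1:ℝ)), if_pos (Finset.mem_univ _),
      if_pos (Finset.mem_univ _), sub_self]
  rw [h2, mul_zero, add_zero]

lemma Wc_apply {n : ℕ} [NeZero n] (hn : 3 ≤ n) (k : ℕ) (v : ZMod n → ℝ) (x : ZMod n) :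
    Wc n k v x = v (x + (k : ZMod n)) + (∑ i : ZMod n, v i) *
      ((if x = ((k : ℕ) : ZMod n) then (1:ℝ) else 0) - (if x = 0 then (1:ℝ) else 0)) := by
  induction k generalizing v x with
  | zero =>
    show v x = _
    rw [Nat.cast_zero, add_zero]
    ring
  | succ k ih =>
    show Wc n k (Gc n ((2*k : ℕ) : ZMod n) v) x = _
    rw [ih, sum_Gc hn, Gc_apply hn]
    rw [show ((2*k:ℕ):ZMod n) + 1 = ((k+1:ℕ):ZMod n) + ((k:ℕ):ZMod n) by push_cast; ring,
      show ((2*k:ℕ):ZMod n) = ((k:ℕ):ZMod n) + ((k:ℕ):ZMod n) by push_cast; ring]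
    simp only [add_left_inj]
    rw [show x + ((k:ℕ):ZMod n) + 1 = x + ((k+1:ℕ):ZMod n) by push_cast; ring]
    ring

lemma A_rowsum {n : ℕ} [NeZero n] (hn : 3 ≤ n) (i : ZMod n) :
    ∑ k : ZMod n, k * ((A n i k : ℤ) : ZMod n) = 0 := by
  have hne1 : i + 1 ≠ i := fun h => oneNeZero hn (by linear_combination h)
  have hne2 : i - 1 ≠ i := fun h => oneNeZero hn (by linear_combination -h)
  have hne3 : i + 1 ≠ i - 1 := by
    intro h
    have h2 : (2 : ZMod n) = 0 := by linear_combination h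
    have := castne (n := n) hn (a := 2) (b := 0) (by omega) (by omega) (by omega)
    rw [Nat.cast_ofNat, Nat.cast_zero] at this
    exact this h2
  have hf : ∀ k : ZMod n, k * ((A n i k : ℤ) : ZMod n) =
      (if k = i then (2:ZMod n) * i else 0) + (if k = i + 1 then -(i+1) else 0)
        + (if k = i - 1 then -(i-1) else 0) := by
    intro k
    by_cases hk : k = i
    · subst hk
      rw [A_self, if_pos rfl, if_neg hne1.symm, if_neg hne2.symm]
      push_cast; ring
    · by_cases hk1 : k = i + 1
      · subst hk1
        rw [A_right hn, if_neg hk, if_pos rfl, if_neg hne3]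
        push_cast; ring
      · by_cases hk2 : k = i - 1
        · subst hk2
          rw [A_left hn, if_neg hk, if_neg (fun h => hne3 h.symm), if_pos rfl]
          push_cast; ring
        · rw [A_zero hk hk1 hk2, if_neg hk, if_neg hk1, if_neg hk2]
          push_cast; ring
  rw [Finset.sum_congr rfl (fun k _ => hf k), Finset.sum_add_distrib,
    Finset.sum_add_distrib, Finset.sum_ite_eq' Finset.univ i (fun _ => (2:ZMod n) * i),
    Finset.sum_ite_eq' Finset.univ (i+1) (fun _ => -(i+1)),
    Finset.sum_ite_eq' Finset.univ (i-1) (fun _ => -(i-1)),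
    if_pos (Finset.mem_univ _), if_pos (Finset.mem_univ _), if_pos (Finset.mem_univ _)]
  ring

def Pint (n : ℕ) [NeZero n] (u : (ZMod n → ℝ) ≃ₗ[ℝ] (ZMod n → ℝ)) : Prop :=
  ∀ x : ZMod n → ℤ, ∃ y : ZMod n → ℤ,
    (∀ a, u (fun b => (x b : ℝ)) a = (y a : ℝ)) ∧
    (∑ a : ZMod n, a * (y a : ZMod n)) = ∑ a : ZMod n, a * (x a : ZMod n)

lemma pint_sRefl {n : ℕ} [NeZero n] (hn : 3 ≤ n) (i : ZMod n) : Pint n (sRefl n i) := by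
  intro x
  refine ⟨fun a => x a - A n i a * x i, fun a => ?_, ?_⟩
  · show (x a : ℝ) - (A n i a : ℝ) * (x i : ℝ) = _
    push_cast; ring
  · have h : ∀ a : ZMod n, a * ((x a - A n i a * x i : ℤ) : ZMod n)
        = a * (x a : ZMod n) - (a * ((A n i a : ℤ) : ZMod n)) * ((x i : ℤ) : ZMod n) := by
      intro a; push_cast; ring
    rw [Finset.sum_congr rfl (fun a _ => h a), Finset.sum_sub_distrib, ← Finset.sum_mul,
      A_rowsum hn i, zero_mul, sub_zero]

lemma sRefl_inv {n : ℕ} (i : ZMod n) : (sRefl n i)⁻¹ = sRefl n i := by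
  have h : sRefl n i * sRefl n i = 1 := by
    apply LinearEquiv.toLinearMap_injective
    apply LinearMap.ext
    intro v
    exact fireF_invol n i v
  exact inv_eq_of_mul_eq_one_right h

lemma pint_of_mem {n : ℕ} [NeZero n] (hn : 3 ≤ n)
    {u : (ZMod n → ℝ) ≃ₗ[ℝ] (ZMod n → ℝ)} (hu : u ∈ affWeyl n) : Pint n u := by
  refine (Subgroup.closure_induction (k := Set.range (sRefl n))
    (p := fun g _ => Pint n g ∧ Pint n g⁻¹) ?_ ?_ ?_ ?_ hu).1
  · rintro g ⟨i, rfl⟩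
    exact ⟨pint_sRefl hn i, by rw [sRefl_inv]; exact pint_sRefl hn i⟩
  · constructor <;>
    · intro x
      refine ⟨x, fun a => ?_, rfl⟩
      simp
  · intro g h _ _ ⟨hg, hginv⟩ ⟨hh, hhinv⟩
    constructor
    · intro x
      obtain ⟨y, hy1, hy2⟩ := hh x
      obtain ⟨z, hz1, hz2⟩ := hg y
      refine ⟨z, fun a => ?_, by rw [hz2, hy2]⟩
      have : h (fun b => (x b : ℝ)) = fun b => (y b : ℝ) := funext hy1
      show g (h (fun b => (x b : ℝ))) a = _
      rw [this]
      exact hz1 a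
    · rw [mul_inv_rev]
      intro x
      obtain ⟨y, hy1, hy2⟩ := hginv x
      obtain ⟨z, hz1, hz2⟩ := hhinv y
      refine ⟨z, fun a => ?_, by rw [hz2, hy2]⟩
      have : g⁻¹ (fun b => (x b : ℝ)) = fun b => (y b : ℝ) := funext hy1
      show h⁻¹ (g⁻¹ (fun b => (x b : ℝ))) a = _
      rw [this]
      exact hz1 a
  · intro g _ ⟨h1, h2⟩
    exact ⟨h2, by rw [inv_inv]; exact h1⟩

lemma indsum {n : ℕ} [NeZero n] (c : ZMod n) :
    ∑ a : ZMod n, a * (((if a = c then (1:ℤ) else 0) : ℤ) : ZMod n) = c := by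
  have h : ∀ a : ZMod n, a * (((if a = c then (1:ℤ) else 0) : ℤ) : ZMod n)
      = if a = c then c else 0 := by
    intro a
    by_cases ha : a = c
    · subst ha; rw [if_pos rfl, if_pos rfl]; push_cast; ring
    · rw [if_neg ha, if_neg ha]; push_cast; ring
  rw [Finset.sum_congr rfl (fun a _ => h a),
    Finset.sum_ite_eq' Finset.univ c (fun _ => c), if_pos (Finset.mem_univ _)]

/-- For each `j` there is exactly one element `w` of the affine Weyl group whose action
is the translation `T_j` composed with a permutation of coordinates coming from a graph
automorphism of the cycle. -/
theorem exists_unique_translation_element (n : ℕ) [NeZero n] (hn : 3 ≤ n) (j : ZMod n) :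
    ∃! w : (ZMod n → ℝ) ≃ₗ[ℝ] (ZMod n → ℝ),
      w ∈ affWeyl n ∧
      ∃ γ : Equiv.Perm (ZMod n), (∀ x y, A n (γ x) (γ y) = A n x y) ∧
        ∀ v : ZMod n → ℝ, w v = Tmap n j (fun x => v (γ x)) := by
  have hjj : ((j.val : ℕ) : ZMod n) = j := ZMod.natCast_rightInverse j
  have hwform : ∀ v : ZMod n → ℝ, Wc n j.val v = Tmap n j (fun y => v (y + j)) := by
    intro v
    funext x
    rw [Wc_apply hn j.val v x, hjj]
    show _ = v (x + j) + (∑ i : ZMod n, v (i + j)) *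
      ((if x = j then (1:ℝ) else 0) - (if x = 0 then (1:ℝ) else 0))
    rw [sum_shift v j]
  refine ⟨Wc n j.val, ⟨Wc_mem n j.val, Equiv.addRight j, fun x y => ?_, fun v => ?_⟩, ?_⟩
  · show A n (x + j) (y + j) = A n x y
    exact A_shift x y j
  · exact hwform v
  · rintro w' ⟨mem', γ', hA', h'⟩
    have hinj : ∀ v : ZMod n → ℝ, w' (fun a => v (γ'.symm a + j)) = Wc n j.val v := by
      intro v
      rw [h' (fun a => v (γ'.symm a + j)), hwform v]
      simp only [Equiv.symm_apply_apply]
    have humem : (w'⁻¹ * Wc n j.val) ∈ affWeyl n := mul_mem (inv_mem mem') (Wc_mem n j.val)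
    have huv : ∀ v : ZMod n → ℝ, (w'⁻¹ * Wc n j.val) v = fun a => v (γ'.symm a + j) := by
      intro v
      show w'⁻¹ (Wc n j.val v) = _
      rw [← hinj v]
      show (w'⁻¹ * w') (fun a => v (γ'.symm a + j)) = _
      rw [inv_mul_cancel]
      rfl
    have hp := pint_of_mem hn humem
    have hfix : ∀ k : ZMod n, γ'.symm k + j = k := by
      intro k
      obtain ⟨y, hy1, hy2⟩ := hp (fun a => if a = k then (1:ℤ) else 0)
      have hyval : ∀ a, y a = if γ'.symm a + j = k then (1:ℤ) else 0 := by
        intro a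
        have h1 := hy1 a
        simp only [huv] at h1
        exact_mod_cast h1.symm
      have hcond : ∀ a : ZMod n, (γ'.symm a + j = k) ↔ a = γ' (k - j) := by
        intro a
        constructor
        · intro h
          have h2 : γ'.symm a = k - j := by rw [← h]; ring
          rw [← h2, Equiv.apply_symm_apply]
        · intro h
          rw [h, Equiv.symm_apply_apply]
          ring
      have hL : ∑ a : ZMod n, a * (y a : ZMod n) = γ' (k - j) := by
        rw [Finset.sum_congr rfl (fun a _ => by
          rw [hyval a, if_congr (hcond a) rfl rfl])]
        exact indsum _
      have hgk : γ' (k - j) = k := by rw [← hL, hy2, indsum k]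
      have h2 : (k - j) = γ'.symm k := (Equiv.eq_symm_apply γ').mpr hgk
      rw [← h2]
      ring
    apply LinearEquiv.toLinearMap_injective
    apply LinearMap.ext
    intro v
    show w' v = Wc n j.val v
    rw [h' v, hwform v]
    have hgg : (fun x => v (γ' x)) = fun y => v (y + j) := by
      funext x
      rw [← hfix (γ' x), Equiv.symm_apply_apply]
    rw [hgg]
end

section
/- Let n ≥ 2 and let s ∈ S̃_n be dominant. Then the inversion number of s (which equals the Coxeter length of s) is given by inv(s) = Σ_{i=1}^{n-1} (n-i)·γ_i(s). -/
/-- `s` is an element of the affine symmetric group `S̃_n`: a bijection of `ℤ` commuting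
with translation by `n` and with normalized sum over a fundamental window. -/
def IsAffPerm (n : ℕ) (s : ℤ → ℤ) : Prop :=
  Function.Bijective s ∧ (∀ i : ℤ, s (i + n) = s i + n) ∧
    ∑ i ∈ Finset.Icc (1 : ℤ) (n : ℤ), s i = ∑ i ∈ Finset.Icc (1 : ℤ) (n : ℤ), i

/-- `s` is dominant: `s(1) < s(2) < ⋯ < s(n)`. -/
def IsDominant (n : ℕ) (s : ℤ → ℤ) : Prop :=
  ∀ i : ℤ, 1 ≤ i → i < (n : ℤ) → s i < s (i + 1)

/-- The inversion number of `s` (equal to the Coxeter length). -/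
noncomputable def invNum (n : ℕ) (s : ℤ → ℤ) : ℕ :=
  Set.ncard {p : ℤ × ℤ | 1 ≤ p.1 ∧ p.1 ≤ (n : ℤ) ∧ p.1 < p.2 ∧ s p.2 < s p.1}

/-- `γ_i(s)` : the number of integers `t` with `s(i) < t < s(i+1)` such that
`t ≢ s(k) (mod n)` for all `i+1 ≤ k ≤ n`. -/
noncomputable def gam (n : ℕ) (s : ℤ → ℤ) (i : ℤ) : ℕ :=
  Set.ncard {t : ℤ | s i < t ∧ t < s (i + 1) ∧
    ∀ k : ℤ, i + 1 ≤ k → k ≤ (n : ℤ) → ¬ t ≡ s k [ZMOD (n : ℤ)]}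

/-! For `1 ≤ i ≤ n`, dominance forces every inversion `(i, j)` to have `j > n`, so `inv(s)` is the
sum over `i` of the sizes of `invFiber n s i = {j > n | s j < s i}`. Passing from `i` to `i + 1`
adds exactly `gapFiber n s i`, the `j > n` with `s i < s j < s (i + 1)`. Since `s j - j` only
depends on `j mod n`, a value `t` in that gap is `s j` for some `j > n` iff `t` is not congruent
to any of `s (i + 1), …, s n`; so the increment is `γ_i`. Hence the `i`-th fiber has
`γ_1 + ⋯ + γ_{i-1}` elements, and summing over `i` produces the weights `n - i`. -/

theorem add_modulus_le_of_modEq_of_lt {j k n : ℤ} (h : j ≡ k [ZMOD n]) (hlt : k < j) :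
    k + n ≤ j := by
  have := Int.le_of_dvd (by omega) h.symm.dvd
  omega

theorem exists_modEq_mem_Icc {n : ℤ} (hn : 0 < n) (j : ℤ) :
    ∃ k ∈ Set.Icc 1 n, j ≡ k [ZMOD n] := by
  refine ⟨(j - 1) % n + 1, ⟨?_, ?_⟩, ?_⟩
  · linarith [Int.emod_nonneg (j - 1) hn.ne']
  · linarith [Int.emod_lt_of_pos (j - 1) hn]
  · simpa using ((Int.mod_modEq (j - 1) n).symm.add_right 1)

theorem sum_Icc_sum_Ico_eq_sum_smul {M : Type*} [AddCommMonoid M] (n : ℕ) (f : ℕ → M) :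
    ∑ i ∈ Finset.Icc 1 n, ∑ l ∈ Finset.Ico 1 i, f l =
      ∑ l ∈ Finset.Icc 1 (n - 1), (n - l) • f l := by
  have hswap : ∀ i l, i ∈ Finset.Icc 1 n ∧ l ∈ Finset.Ico 1 i ↔
      i ∈ Finset.Ioc l n ∧ l ∈ Finset.Icc 1 (n - 1) := fun i l => by
    simp only [Finset.mem_Icc, Finset.mem_Ico, Finset.mem_Ioc]; omega
  rw [Finset.sum_comm' hswap]
  simp only [Finset.sum_const, Nat.card_Ioc]

section AffinePermutation

variable {n : ℕ} {s : ℤ → ℤ}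

theorem sub_eq_sub_of_modEq (hper : ∀ i, s (i + n) = s i + n) {j k : ℤ}
    (h : j ≡ k [ZMOD n]) : s j - s k = j - k := by
  have hperiodic : Function.Periodic (fun i => s i - i) (n : ℤ) := fun i => by
    simp only [hper]; ring
  obtain ⟨m, hm⟩ := h.symm.dvd
  have := hperiodic.int_mul m k
  simp only [Int.cast_id, show j = k + m * n by linarith] at this ⊢
  linarith

theorem modEq_iff_of_injective (hinj : Function.Injective s) (hper : ∀ i, s (i + n) = s i + n)
    {j k : ℤ} : s j ≡ s k [ZMOD n] ↔ j ≡ k [ZMOD n] := by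
  refine ⟨fun h => ?_, fun h => Int.modEq_iff_dvd.mpr ?_⟩
  · obtain ⟨m, hm⟩ := h.symm.dvd
    have hk : k + m * n ≡ k [ZMOD n] := Int.add_mul_modulus_modEq_iff.mpr rfl
    have : s (k + m * n) = s j := by linarith [sub_eq_sub_of_modEq hper hk]
    rw [← hinj this]
    exact hk
  · rw [sub_eq_sub_of_modEq hper h.symm]
    exact h.dvd

theorem IsDominant.strictMonoOn (hd : IsDominant n s) : StrictMonoOn s (Set.Icc 1 n) :=
  strictMonoOn_of_lt_succ Set.ordConnected_Icc fun a _ ha hsa => by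
    simp only [Order.succ_eq_add_one, Set.mem_Icc] at ha hsa ⊢
    exact hd a ha.1 (by omega)

def invFiber (n : ℕ) (s : ℤ → ℤ) (i : ℤ) : Set ℤ := {j | (n : ℤ) < j ∧ s j < s i}

def gapFiber (n : ℕ) (s : ℤ → ℤ) (i : ℤ) : Set ℤ :=
  {j | (n : ℤ) < j ∧ s i < s j ∧ s j < s (i + 1)}

theorem IsDominant.map_one_add_le (hd : IsDominant n s) (hn : 0 < n)
    (hper : ∀ i, s (i + n) = s i + n) {j : ℤ} (hj : (n : ℤ) < j) : s 1 + n ≤ s j := by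
  obtain ⟨k, hk, hjk⟩ := exists_modEq_mem_Icc (Int.natCast_pos.mpr hn) j
  have h1k : s 1 ≤ s k := hd.strictMonoOn.monotoneOn ⟨le_rfl, by omega⟩ hk hk.1
  have := add_modulus_le_of_modEq_of_lt hjk (by linarith [hk.2])
  linarith [sub_eq_sub_of_modEq hper hjk]

theorem invFiber_finite (hn : 0 < n) (hinj : Function.Injective s)
    (hper : ∀ i, s (i + n) = s i + n) (hd : IsDominant n s) (i : ℤ) :
    (invFiber n s i).Finite :=
  (Set.finite_Icc (s 1 + n) (s i)).preimage hinj.injOn |>.subset fun _ hj =>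
    ⟨hd.map_one_add_le hn hper hj.1, hj.2.le⟩

theorem invFiber_one (hn : 0 < n) (hper : ∀ i, s (i + n) = s i + n) (hd : IsDominant n s) :
    invFiber n s 1 = ∅ :=
  Set.eq_empty_of_forall_notMem fun _ hj => by
    linarith [hd.map_one_add_le hn hper hj.1, hj.2]

theorem invFiber_add_one (hinj : Function.Injective s) (hd : IsDominant n s) {i : ℤ}
    (hi : 1 ≤ i) (hin : i < n) :
    invFiber n s (i + 1) = invFiber n s i ∪ gapFiber n s i := by
  have hsi := hd i hi hin
  ext j
  simp only [invFiber, gapFiber, Set.mem_ofPred_eq, Set.mem_union]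
  constructor
  · rintro ⟨hj, hlt⟩
    rcases lt_trichotomy (s j) (s i) with h | h | h
    · exact .inl ⟨hj, h⟩
    · exact absurd (hinj h) (by omega)
    · exact .inr ⟨hj, h, hlt⟩
  · rintro (⟨hj, h⟩ | ⟨hj, -, h⟩)
    exacts [⟨hj, h.trans hsi⟩, ⟨hj, h⟩]

theorem disjoint_invFiber_gapFiber (i : ℤ) : Disjoint (invFiber n s i) (gapFiber n s i) :=
  Set.disjoint_left.mpr fun _ h h' => h.2.not_gt h'.2.1

theorem image_gapFiber (hn : 0 < n) (hbij : Function.Bijective s)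
    (hper : ∀ i, s (i + n) = s i + n) (hd : IsDominant n s) {i : ℤ} (hi : 1 ≤ i) (hin : i < n) :
    s '' gapFiber n s i = {t : ℤ | s i < t ∧ t < s (i + 1) ∧
      ∀ k : ℤ, i + 1 ≤ k → k ≤ (n : ℤ) → ¬ t ≡ s k [ZMOD (n : ℤ)]} := by
  have hmono := hd.strictMonoOn.monotoneOn
  ext t
  constructor
  · rintro ⟨j, ⟨hj, hij, hji⟩, rfl⟩
    refine ⟨hij, hji, fun k hk hkn hjk => ?_⟩
    rw [modEq_iff_of_injective hbij.1 hper] at hjk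
    have : s (i + 1) ≤ s k := hmono ⟨by omega, by omega⟩ ⟨by omega, hkn⟩ hk
    linarith [sub_eq_sub_of_modEq hper hjk]
  · rintro ⟨hit, hti, hres⟩
    obtain ⟨j, rfl⟩ := hbij.2 t
    obtain ⟨k, hk, hjk⟩ := exists_modEq_mem_Icc (Int.natCast_pos.mpr hn) j
    have hki : k ≤ i := by
      by_contra! hik
      exact hres k hik hk.2 ((modEq_iff_of_injective hbij.1 hper).mpr hjk)
    have : s k ≤ s i := hmono hk ⟨hi, hin.le⟩ hki
    have := add_modulus_le_of_modEq_of_lt hjk (by linarith [sub_eq_sub_of_modEq hper hjk])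
    exact ⟨j, ⟨by linarith [hk.1], hit, hti⟩, rfl⟩

theorem ncard_invFiber_add_one (hn : 0 < n) (hbij : Function.Bijective s)
    (hper : ∀ i, s (i + n) = s i + n) (hd : IsDominant n s) {i : ℤ} (hi : 1 ≤ i) (hin : i < n) :
    (invFiber n s (i + 1)).ncard = (invFiber n s i).ncard + gam n s i := by
  have hfin := invFiber_finite hn hbij.1 hper hd
  rw [gam, ← image_gapFiber hn hbij hper hd hi hin, Set.ncard_image_of_injective _ hbij.1,
    invFiber_add_one hbij.1 hd hi hin, Set.ncard_union_eq (disjoint_invFiber_gapFiber i) (hfin i)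
      ((hfin (i + 1)).subset fun _ hj => ⟨hj.1, hj.2.2⟩)]

theorem ncard_invFiber_eq_sum_gam (hn : 0 < n) (hbij : Function.Bijective s)
    (hper : ∀ i, s (i + n) = s i + n) (hd : IsDominant n s) {i : ℕ} (hi : 1 ≤ i) (hin : i ≤ n) :
    (invFiber n s i).ncard = ∑ l ∈ Finset.Ico 1 i, gam n s l := by
  induction i, hi using Nat.le_induction with
  | base => simp [invFiber_one hn hper hd]
  | succ i hi ih =>
    rw [Finset.sum_Ico_succ_top hi, ← ih (by omega), Nat.cast_succ,
      ncard_invFiber_add_one hn hbij hper hd (by omega) (by omega)]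

theorem invNum_eq_sum_ncard_invFiber (hn : 0 < n) (hinj : Function.Injective s)
    (hper : ∀ i, s (i + n) = s i + n) (hd : IsDominant n s) :
    invNum n s = ∑ i ∈ Finset.Icc 1 n, (invFiber n s i).ncard := by
  have hset : {p : ℤ × ℤ | 1 ≤ p.1 ∧ p.1 ≤ (n : ℤ) ∧ p.1 < p.2 ∧ s p.2 < s p.1} =
      ⋃ i ∈ (Finset.Icc 1 n : Set ℕ), Prod.mk (i : ℤ) '' invFiber n s i := by
    ext ⟨a, b⟩
    simp only [Set.mem_ofPred_eq, Set.mem_iUnion, Set.mem_image, Finset.coe_Icc, Set.mem_Icc,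
      Prod.mk.injEq, invFiber, exists_prop]
    constructor
    · rintro ⟨h1a, han, hab, hsab⟩
      have hnb : (n : ℤ) < b := by
        by_contra! hbn
        exact hsab.not_gt (hd.strictMonoOn ⟨h1a, han⟩ ⟨by omega, hbn⟩ hab)
      exact ⟨a.toNat, ⟨by omega, by omega⟩, b, ⟨hnb, by rwa [Int.toNat_of_nonneg (by omega)]⟩,
        by omega, rfl⟩
    · rintro ⟨i, ⟨h1i, hin⟩, b, ⟨hnb, hsb⟩, rfl, rfl⟩
      exact ⟨by omega, by omega, by omega, hsb⟩
  rw [invNum, hset, (Finset.finite_toSet _).ncard_biUnion, finsum_mem_coe_finset]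
  · simp_rw [Set.ncard_image_of_injective _ (Prod.mk_right_injective _)]
  · exact fun i _ => (invFiber_finite hn hinj hper hd i).image _
  · intro i _ j _ hij
    simp only [Function.onFun, Set.disjoint_left]
    rintro _ ⟨_, _, rfl⟩ ⟨_, _, h⟩
    exact hij (by simpa using congrArg Prod.fst h.symm)

end AffinePermutation

/-- For a dominant element `s` of the affine symmetric group,
`inv(s) = Σ_{i=1}^{n-1} (n-i)·γ_i(s)`. -/
theorem inv_eq_weighted_sum_gamma (n : ℕ) (hn : 2 ≤ n) (s : ℤ → ℤ)
    (hs : IsAffPerm n s) (hd : IsDominant n s) :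
    invNum n s = ∑ i ∈ Finset.Icc 1 (n - 1), (n - i) * gam n s (i : ℤ) := by
  obtain ⟨hbij, hper, -⟩ := hs
  have hn0 : 0 < n := by omega
  calc invNum n s = ∑ i ∈ Finset.Icc 1 n, (invFiber n s i).ncard :=
        invNum_eq_sum_ncard_invFiber hn0 hbij.1 hper hd
    _ = ∑ i ∈ Finset.Icc 1 n, ∑ l ∈ Finset.Ico 1 i, gam n s l :=
        Finset.sum_congr rfl fun i hi => by
          rw [Finset.mem_Icc] at hi
          exact ncard_invFiber_eq_sum_gam hn0 hbij hper hd hi.1 hi.2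
    _ = _ := by simp only [sum_Icc_sum_Ico_eq_sum_smul, smul_eq_mul]
end
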